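/- arXiv:1711.01868 — 7 statements merged into one kernel-verified Lean document; each statement's English description precedes it below -/
import Mathlib

section
/- Let q = p^f with p prime. For each γ ∈ F_{q²}× and each δ ∈ F_{q²} with δ^{q+1} = 1, the system of equations a^{p−1} = γ^{q+1}, b^p = bγ^qδ, a + a^q + b^{q+1} = 0 has at most p − 1 solutions (a,b) ∈ F_{q²} × F_{q²}. -/
namespace Stmt1

private lemma ncard_pow_eq_le {K : Type*} [Field K] {n : ℕ} (hn : 0 < n) (c : K) :
    Set.ncard {x : K | x ^ n = c} ≤ n := by
  classical
  have h : {x : K | x ^ n = c} = ↑((Polynomial.nthRoots n c).toFinset) := by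
    ext x
    simp [Polynomial.mem_nthRoots hn]
  rw [h, Set.ncard_coe_finset]
  exact le_trans (Multiset.toFinset_card_le _) (by simpa using Polynomial.card_nthRoots n c)

private lemma pow_q_eq {K : Type*} [Field K] (p f : ℕ) (hp : p.Prime) (lam : K)
    (h : lam ^ (p - 1) = 1) : lam ^ (p ^ f) = lam := by
  have hp1 : lam ^ p = lam := by
    have hpp : p - 1 + 1 = p := Nat.succ_pred_eq_of_pos hp.pos
    calc lam ^ p = lam ^ (p - 1) * lam := by rw [← pow_succ, hpp]
    _ = lam := by rw [h, one_mul]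
  induction f with
  | zero => simp
  | succ n ih => rw [pow_succ, pow_mul, ih, hp1]

theorem system_PSU_at_most_p_sub_one_solutions
    (p f q : ℕ) (hp : p.Prime) (hf : 0 < f) (hq : q = p ^ f)
    (K : Type*) [Field K] [Fintype K] (hK : Fintype.card K = q ^ 2)
    (γ : K) (hγ : γ ≠ 0) (δ : K) (hδ : δ ^ (q + 1) = 1) :
    Set.ncard {ab : K × K |
        ab.1 ^ (p - 1) = γ ^ (q + 1) ∧
        ab.2 ^ p = ab.2 * γ ^ q * δ ∧
        ab.1 + ab.1 ^ q + ab.2 ^ (q + 1) = 0} ≤ p - 1 := by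
  classical
  set S : Set (K × K) := {ab : K × K |
        ab.1 ^ (p - 1) = γ ^ (q + 1) ∧
        ab.2 ^ p = ab.2 * γ ^ q * δ ∧
        ab.1 + ab.1 ^ q + ab.2 ^ (q + 1) = 0} with hS
  have hp1pos : 0 < p - 1 := Nat.sub_pos_of_lt hp.one_lt
  have hγq : γ ^ (q + 1) ≠ 0 := pow_ne_zero _ hγ
  -- any solution has a ≠ 0
  have ha_ne : ∀ ab ∈ S, ab.1 ≠ 0 := by
    rintro ⟨a, b⟩ ⟨h1, _, _⟩ rfl
    simp only at h1
    exact hγq (by rw [← h1]; exact zero_pow hp1pos.ne')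
  -- key torsor fact: if (a,b), (a',b') ∈ S then a' + a'^q = (a'/a) * (a + a^q)
  have key : ∀ ab ∈ S, ∀ ab' ∈ S,
      (ab' : K × K).1 + ab'.1 ^ q = (ab'.1 * ab.1⁻¹) * (ab.1 + ab.1 ^ q) := by
    rintro ⟨a, b⟩ ⟨h1, _, _⟩ ⟨a', b'⟩ ⟨h1', _, _⟩
    simp only at h1 h1' ⊢
    have ha : a ≠ 0 := ha_ne (a, b) ⟨h1, ‹_›, ‹_›⟩
    set lam : K := a' * a⁻¹ with hlam
    have hlam1 : lam ^ (p - 1) = 1 := by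
      rw [hlam, mul_pow, inv_pow, h1', h1]
      field_simp
    have hlamq : lam ^ q = lam := hq ▸ pow_q_eq p f hp lam hlam1
    have ha' : a' = lam * a := by rw [hlam]; field_simp
    rw [ha', mul_pow, hlamq, mul_add]
  by_cases hcase : ∃ ab ∈ S, (ab : K × K).2 ≠ 0
  · -- all solutions have b ≠ 0; inject via b into roots of x^(p-1) = γ^q * δ
    obtain ⟨⟨a₀, b₀⟩, hab₀, hb₀⟩ := hcase
    have hb_ne : ∀ ab ∈ S, (ab : K × K).2 ≠ 0 := by
      rintro ⟨a, b⟩ hab rfl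
      obtain ⟨h1, h2, h3⟩ := hab
      simp only at h1 h2 h3
      have haq : a + a ^ q = 0 := by
        have : (0 : K) ^ (q + 1) = 0 := zero_pow (by omega)
        rw [this, add_zero] at h3; exact h3
      have heq := key (a, 0) ⟨h1, h2, h3⟩ (a₀, b₀) hab₀
      simp only [haq, mul_zero] at heq
      obtain ⟨_, _, h3₀⟩ := hab₀
      simp only at h3₀
      have hb₀q : b₀ ^ (q + 1) = 0 := by linear_combination h3₀ - heq
      exact hb₀ (pow_eq_zero_iff (n := q + 1) (by omega) |>.mp hb₀q)
    apply le_trans (Set.ncard_le_ncard_of_injOn (fun ab => ab.2)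
      (t := {x : K | x ^ (p - 1) = γ ^ q * δ}) ?_ ?_ (Set.toFinite _))
    · exact ncard_pow_eq_le hp1pos _
    · rintro ⟨a, b⟩ hab
      obtain ⟨h1, h2, h3⟩ := hab
      simp only at h2 ⊢
      have hb : b ≠ 0 := hb_ne (a, b) ⟨h1, h2, h3⟩
      have hpp : p - 1 + 1 = p := Nat.succ_pred_eq_of_pos hp.pos
      have : b ^ (p - 1) * b = (γ ^ q * δ) * b := by
        rw [← pow_succ, hpp, h2]; ring
      exact mul_right_cancel₀ hb this
    · rintro ⟨a, b⟩ hab ⟨a', b'⟩ hab' hbb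
      simp only at hbb
      subst hbb
      have hb : b ≠ 0 := hb_ne (a, b) hab
      have hbq : b ^ (q + 1) ≠ 0 := pow_ne_zero _ hb
      obtain ⟨h1, h2, h3⟩ := hab
      obtain ⟨h1', h2', h3'⟩ := hab'
      simp only at h1 h3 h1' h3'
      have hk := key (a, b) ⟨h1, h2, h3⟩ (a', b) ⟨h1', h2', h3'⟩
      simp only at hk
      have ha : a ≠ 0 := ha_ne (a, b) ⟨h1, h2, h3⟩
      have e1 : a + a ^ q = -(b ^ (q + 1)) := by linear_combination h3
      have e2 : a' + a' ^ q = -(b ^ (q + 1)) := by linear_combination h3'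
      rw [e1, e2] at hk
      have hz : (a' * a⁻¹ - 1) * b ^ (q + 1) = 0 := by linear_combination hk
      rcases mul_eq_zero.mp hz with hz | hz
      · have hlam : a' * a⁻¹ = 1 := by linear_combination hz
        have haeq : a' = a := by field_simp at hlam; exact hlam
        simp [haeq]
      · exact absurd hz hbq
  · -- all solutions have b = 0; inject via a into roots of x^(p-1) = γ^(q+1)
    push_neg at hcase
    apply le_trans (Set.ncard_le_ncard_of_injOn (fun ab => ab.1)
      (t := {x : K | x ^ (p - 1) = γ ^ (q + 1)}) ?_ ?_ (Set.toFinite _))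
    · exact ncard_pow_eq_le hp1pos _
    · rintro ⟨a, b⟩ ⟨h1, _, _⟩
      exact h1
    · rintro ⟨a, b⟩ hab ⟨a', b'⟩ hab' haa
      simp only at haa
      have hb : b = 0 := hcase (a, b) hab
      have hb' : b' = 0 := hcase (a', b') hab'
      simp [haa, hb, hb']

end Stmt1
end

section
/- Let q = p^f with p an odd prime, and let ω be a generator of the cyclic group F_{q²}×. The diagonal matrix diag(ω^{(q+1)(p−1)/2}, ω^{q(p−1)/2}, 1) preserves the Hermitian form β up to a nonzero scalar, hence induces a permutation g ∈ PGU(3,q) of Ω; and hg⁻¹ fixes the p + 1 points ⟨(1,0,0)⟩, ⟨(0,0,1)⟩, and ⟨(ω^{i(q²−1)/(p−1)+(q+1)/2}, 0, 1)⟩ for 1 ≤ i ≤ p − 1. In particular |fix(hg⁻¹)| ≥ p + 1. -/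
open scoped Classical

noncomputable section

namespace Stmt4

variable (K : Type*) [Field K]

/-- The Hermitian form `β((x₁,x₂,x₃),(y₁,y₂,y₃)) = x₁y₃^q + x₂y₂^q + x₃y₁^q`. -/
def beta (q : ℕ) (x y : Fin 3 → K) : K :=
  x 0 * y 2 ^ q + x 1 * y 1 ^ q + x 2 * y 0 ^ q

/-- `Ω`: the totally isotropic one-dimensional subspaces of `K³`. -/
def Omega (q : ℕ) : Type _ :=
  {W : Submodule K (Fin 3 → K) //
    ∃ v : Fin 3 → K, v ≠ 0 ∧ W = Submodule.span K {v} ∧ beta K q v v = 0}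

/-- The point of `Ω` spanned by an isotropic nonzero vector `v`. -/
def mkOmega (q : ℕ) (v : Fin 3 → K) (hv : v ≠ 0) (h0 : beta K q v v = 0) : Omega K q :=
  ⟨Submodule.span K {v}, v, hv, rfl, h0⟩

/-- `PGU(3,q)`: permutations of `Ω` induced by invertible linear maps preserving `β`
up to a nonzero scalar. -/
def PGU (q : ℕ) : Set (Equiv.Perm (Omega K q)) :=
  {g | ∃ (T : (Fin 3 → K) ≃ₗ[K] (Fin 3 → K)) (c : K), c ≠ 0 ∧
    (∀ x y, beta K q (T x) (T y) = c * beta K q x y) ∧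
    ∀ (v : Fin 3 → K) (hv : v ≠ 0) (h0 : beta K q v v = 0),
      (g (mkOmega K q v hv h0)).1 = Submodule.span K {T v}}

/-- `h` is the permutation of `Ω` induced by the field automorphism `x ↦ x^p`. -/
def IsFrob (p q : ℕ) (h : Equiv.Perm (Omega K q)) : Prop :=
  ∀ (v : Fin 3 → K) (hv : v ≠ 0) (h0 : beta K q v v = 0),
    (h (mkOmega K q v hv h0)).1 = Submodule.span K {fun i => v i ^ p}


/-- Auxiliary family of vectors used to exhibit `p+1` fixed points. -/
def pts (σ : K) (p D n0 : ℕ) : ℕ → Fin 3 → K := fun k =>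
  if k = 0 then ![1, 0, 0] else if k = p then ![0, 0, 1] else ![σ ^ (k * D + n0), 0, 1]

lemma pts_zero (σ : K) (p D n0 : ℕ) : pts K σ p D n0 0 = ![1, 0, 0] := by
  simp [pts]

lemma pts_self (σ : K) (p D n0 : ℕ) (hp : p ≠ 0) : pts K σ p D n0 p = ![0, 0, 1] := by
  simp [pts, hp]

lemma pts_mid (σ : K) (p D n0 k : ℕ) (h1 : k ≠ 0) (h2 : k ≠ p) :
    pts K σ p D n0 k = ![σ ^ (k * D + n0), 0, 1] := by
  simp [pts, h1, h2]

lemma span_eq_smul (u w : Fin 3 → K)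
    (hsp : Submodule.span K {u} = Submodule.span K {w}) : ∃ c : K, u = c • w := by
  have hu : u ∈ Submodule.span K {w} := hsp ▸ Submodule.mem_span_singleton_self u
  obtain ⟨c, hc⟩ := Submodule.mem_span_singleton.mp hu
  exact ⟨c, hc.symm⟩

set_option maxHeartbeats 1600000 in

/-- Let `p` be an odd prime, `q = p^f`, and let `ω` generate `Kˣ` where `|K| = q²`.
The diagonal matrix `diag(ω^{(q+1)(p-1)/2}, ω^{q(p-1)/2}, 1)` preserves the Hermitian
form `β` up to a nonzero scalar, hence induces a permutation `g ∈ PGU(3,q)` of `Ω`;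
and `hg⁻¹` fixes the `p + 1` points `⟨(1,0,0)⟩`, `⟨(0,0,1)⟩` and
`⟨(ω^{i(q²-1)/(p-1)+(q+1)/2}, 0, 1)⟩` for `1 ≤ i ≤ p - 1` (a point is fixed by `hg⁻¹`,
permutations acting on the right, precisely when `h` and `g` agree on it). In
particular `|fix(hg⁻¹)| ≥ p + 1`. -/
theorem frobenius_agrees_with_diagonal
    (p f q : ℕ) (hp : p.Prime) (hodd : Odd p) (hf : 0 < f) (hq : q = p ^ f)
    (K : Type*) [Field K] [Fintype K] (hK : Fintype.card K = q ^ 2)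
    (ω : Kˣ) (hω : ∀ u : Kˣ, u ∈ Subgroup.zpowers ω)
    (T : (Fin 3 → K) ≃ₗ[K] (Fin 3 → K))
    (hT : ∀ v : Fin 3 → K, T v =
      ![(ω : K) ^ ((q + 1) * (p - 1) / 2) * v 0, (ω : K) ^ (q * (p - 1) / 2) * v 1, v 2])
    (h g : Equiv.Perm (Omega K q)) (hh : IsFrob K p q h)
    (hg : ∀ (v : Fin 3 → K) (hv : v ≠ 0) (h0 : beta K q v v = 0),
      (g (mkOmega K q v hv h0)).1 = Submodule.span K {T v}) :
    (∃ c : K, c ≠ 0 ∧ ∀ x y, beta K q (T x) (T y) = c * beta K q x y) ∧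
    g ∈ PGU K q ∧
    (∃ (hv : (![1, 0, 0] : Fin 3 → K) ≠ 0)
        (h0 : beta K q ![1, 0, 0] ![1, 0, 0] = 0),
      h (mkOmega K q ![1, 0, 0] hv h0) = g (mkOmega K q ![1, 0, 0] hv h0)) ∧
    (∃ (hv : (![0, 0, 1] : Fin 3 → K) ≠ 0)
        (h0 : beta K q ![0, 0, 1] ![0, 0, 1] = 0),
      h (mkOmega K q ![0, 0, 1] hv h0) = g (mkOmega K q ![0, 0, 1] hv h0)) ∧
    (∀ i : ℕ, 1 ≤ i → i ≤ p - 1 →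
      ∃ (hv : (![(ω : K) ^ (i * ((q ^ 2 - 1) / (p - 1)) + (q + 1) / 2), 0, 1] :
            Fin 3 → K) ≠ 0)
        (h0 : beta K q ![(ω : K) ^ (i * ((q ^ 2 - 1) / (p - 1)) + (q + 1) / 2), 0, 1]
          ![(ω : K) ^ (i * ((q ^ 2 - 1) / (p - 1)) + (q + 1) / 2), 0, 1] = 0),
      h (mkOmega K q ![(ω : K) ^ (i * ((q ^ 2 - 1) / (p - 1)) + (q + 1) / 2), 0, 1] hv h0)
        = g (mkOmega K q ![(ω : K) ^ (i * ((q ^ 2 - 1) / (p - 1)) + (q + 1) / 2), 0, 1] hv h0)) ∧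
    p + 1 ≤ Nat.card {x : Omega K q | h x = g x} := by
  -- ## numeric setup
  obtain ⟨m, hp'⟩ := hodd
  have hm1 : 1 ≤ m := by have := hp.two_le; omega
  have hp1 : p - 1 = 2 * m := by omega
  have hq3 : 3 ≤ q := by
    have h1 : p ≤ p ^ f := Nat.le_self_pow (by omega) p
    omega
  have hq0 : q ≠ 0 := by omega
  have hdvd : (p - 1) ∣ (q - 1) := by
    have := Nat.sub_dvd_pow_sub_pow p 1 f
    simpa [hq] using this
  obtain ⟨t, ht⟩ := hdvd
  have htpos : 0 < t := by
    rcases Nat.eq_zero_or_pos t with h0 | h0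
    · subst h0; simp at ht; omega
    · exact h0
  have hq' : q = 2 * (m * t) + 1 := by
    have h2 : q - 1 = 2 * (m * t) := by rw [ht, hp1]; ring
    have := Nat.eq_add_of_sub_eq (by omega : 1 ≤ q) h2
    omega
  have hsq : q ^ 2 - 1 = 4 * (m * t) * (m * t) + 4 * (m * t) :=
    Nat.sub_eq_of_eq_add (by rw [hq']; ring)
  have hNpos : 0 < q ^ 2 - 1 := by
    have h1 : 1 ≤ m * t := Nat.mul_pos hm1 htpos
    rw [hsq]; nlinarith
  have d1 : (q + 1) * (p - 1) / 2 = (q + 1) * m := by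
    have e : (q + 1) * (p - 1) = ((q + 1) * m) * 2 := by rw [hp1]; ring
    rw [e, Nat.mul_div_cancel _ (by norm_num)]
  have d2 : q * (p - 1) / 2 = q * m := by
    have e : q * (p - 1) = (q * m) * 2 := by rw [hp1]; ring
    rw [e, Nat.mul_div_cancel _ (by norm_num)]
  have d3 : (q + 1) / 2 = m * t + 1 := by
    have e : q + 1 = (m * t + 1) * 2 := by rw [hq']; ring
    rw [e, Nat.mul_div_cancel _ (by norm_num)]
  have d4 : (q ^ 2 - 1) / (p - 1) = t * (q + 1) := by
    have e : q ^ 2 - 1 = (t * (q + 1)) * (p - 1) := by rw [hsq, hq', hp1]; ring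
    rw [e, Nat.mul_div_cancel _ (by omega)]
  have hNval : q ^ 2 - 1 = (p - 1) * (t * (q + 1)) := by rw [hsq, hp1, hq']; ring
  -- ## the generator
  set σ : K := (ω : K) with hσdef
  have hσ0 : σ ≠ 0 := ω.ne_zero
  have hord : orderOf ω = q ^ 2 - 1 := by
    rw [orderOf_eq_card_of_forall_mem_zpowers hω, Nat.card_units,
      Nat.card_eq_fintype_card, hK]
  have hσN : σ ^ (q ^ 2 - 1) = 1 := by
    rw [← hord]
    calc σ ^ orderOf ω = ((ω ^ orderOf ω : Kˣ) : K) := by rw [Units.val_pow_eq_pow_val]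
    _ = 1 := by rw [pow_orderOf_eq_one]; rfl
  have hσk : ∀ k, σ ^ (k * (q ^ 2 - 1)) = 1 := fun k => by
    rw [mul_comm, pow_mul, hσN, one_pow]
  have hshift : ∀ a b k : ℕ, a = b + k * (q ^ 2 - 1) → σ ^ a = σ ^ b := by
    intro a b k e; rw [e, pow_add, hσk, mul_one]
  have hmod : ∀ a b : ℕ, σ ^ a = σ ^ b → a ≡ b [MOD q ^ 2 - 1] := by
    intro a b hab
    have h1 : (ω ^ a : Kˣ) = ω ^ b := Units.ext (by simpa using hab)
    have := pow_eq_pow_iff_modEq.mp h1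
    rwa [hord] at this
  have hneg : σ ^ (2 * (m * t) * (m * t + 1)) = -1 := by
    have hsq2 : σ ^ (2*(m*t)*(m*t+1)) * σ ^ (2*(m*t)*(m*t+1)) = 1 := by
      rw [← pow_add]
      have e : 2*(m*t)*(m*t+1) + 2*(m*t)*(m*t+1) = 1 * (q ^ 2 - 1) := by rw [hsq]; ring
      rw [e, hσk]
    rcases mul_self_eq_one_iff.mp hsq2 with h1 | h1
    · exfalso
      have hmm := hmod _ 0 (by simpa using h1)
      have hdv : (q ^ 2 - 1) ∣ 2*(m*t)*(m*t+1) := (Nat.modEq_zero_iff_dvd).mp hmm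
      have hpos : 0 < 2*(m*t)*(m*t+1) :=
        Nat.mul_pos (Nat.mul_pos (by norm_num) (Nat.mul_pos hm1 htpos)) (Nat.succ_pos _)
      have hle := Nat.le_of_dvd hpos hdv
      have hlt : 2*(m*t)*(m*t+1) < q ^ 2 - 1 := by
        have h1t : 1 ≤ m * t := Nat.mul_pos hm1 htpos
        rw [hsq]; nlinarith
      omega
    · exact h1
  -- ## key exponent identities
  have keyq : ∀ i : ℕ, (i * ((q^2-1)/(p-1)) + (q+1)/2) * q
      = (i * ((q^2-1)/(p-1)) + (q+1)/2) + 2*(m*t)*(m*t+1) + (i*t)*(q^2-1) := by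
    intro i; rw [d3, d4, hsq, hq']; ring
  have keyp : ∀ i : ℕ, (i * ((q^2-1)/(p-1)) + (q+1)/2) * p
      = (q+1)*(p-1)/2 + (i * ((q^2-1)/(p-1)) + (q+1)/2) + i*(q^2-1) := by
    intro i; rw [d1, d3, d4, hsq, hq', hp']; ring
  -- ## preservation of the form
  have hBB : σ ^ (q*(p-1)/2) * (σ ^ (q*(p-1)/2)) ^ q = σ ^ ((q+1)*(p-1)/2) := by
    rw [d1, d2, ← pow_mul, ← pow_add]
    exact hshift _ _ m (by rw [hsq, hq']; ring)
  have hAA : (σ ^ ((q+1)*(p-1)/2)) ^ q = σ ^ ((q+1)*(p-1)/2) := by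
    rw [d1, ← pow_mul]
    exact hshift _ _ m (by rw [hsq, hq']; ring)
  have hpres : ∀ x y, beta K q (T x) (T y) = σ ^ ((q+1)*(p-1)/2) * beta K q x y := by
    intro x y
    rw [hT x, hT y]
    simp only [beta, Matrix.cons_val_zero, Matrix.cons_val_one, Matrix.head_cons,
      Matrix.cons_val_two, Matrix.tail_cons]
    rw [mul_pow, mul_pow]
    linear_combination (x 1 * (y 1) ^ q) * hBB + (x 2 * (y 0) ^ q) * hAA
  have hc0 : σ ^ ((q+1)*(p-1)/2) ≠ 0 := pow_ne_zero _ hσ0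
  -- ## fixed point ⟨(1,0,0)⟩
  have hv1 : (![1, 0, 0] : Fin 3 → K) ≠ 0 := by
    intro hcontra
    have := congrFun hcontra 0
    simp at this
  have h01 : beta K q ![1, 0, 0] ![1, 0, 0] = 0 := by
    simp [beta, zero_pow hq0]
  have hpt1 : h (mkOmega K q ![1, 0, 0] hv1 h01) = g (mkOmega K q ![1, 0, 0] hv1 h01) := by
    apply Subtype.ext
    rw [hh _ hv1 h01, hg _ hv1 h01]
    have e1 : (fun i => (![1, 0, 0] : Fin 3 → K) i ^ p) = ![1, 0, 0] := by
      funext i; fin_cases i <;> simp [zero_pow hp.pos.ne']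
    have e2 : T ![(1 : K), 0, 0] = σ ^ ((q+1)*(p-1)/2) • ![1, 0, 0] := by
      rw [hT]; funext i; fin_cases i <;> simp
    rw [e1, e2, Submodule.span_singleton_smul_eq (ω.isUnit.pow _) _]
  -- ## fixed point ⟨(0,0,1)⟩
  have hv2 : (![0, 0, 1] : Fin 3 → K) ≠ 0 := by
    intro hcontra
    have := congrFun hcontra 2
    simp at this
  have h02 : beta K q ![0, 0, 1] ![0, 0, 1] = 0 := by
    simp [beta, zero_pow hq0]
  have hpt2 : h (mkOmega K q ![0, 0, 1] hv2 h02) = g (mkOmega K q ![0, 0, 1] hv2 h02) := by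
    apply Subtype.ext
    rw [hh _ hv2 h02, hg _ hv2 h02]
    have e1 : (fun i => (![0, 0, 1] : Fin 3 → K) i ^ p) = T ![(0 : K), 0, 1] := by
      rw [hT]; funext i; fin_cases i <;> simp [zero_pow hp.pos.ne']
    rw [e1]
  -- ## the family of fixed points
  have hvE : ∀ e : ℕ, (![σ ^ e, 0, 1] : Fin 3 → K) ≠ 0 := by
    intro e hcontra
    have := congrFun hcontra 2
    simp at this
  have h0E : ∀ i : ℕ, beta K q ![σ ^ (i * ((q^2-1)/(p-1)) + (q+1)/2), 0, 1]
      ![σ ^ (i * ((q^2-1)/(p-1)) + (q+1)/2), 0, 1] = 0 := by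
    intro i
    have hbet : beta K q ![σ ^ (i * ((q^2-1)/(p-1)) + (q+1)/2), 0, 1]
        ![σ ^ (i * ((q^2-1)/(p-1)) + (q+1)/2), 0, 1]
        = σ ^ (i * ((q^2-1)/(p-1)) + (q+1)/2)
          + (σ ^ (i * ((q^2-1)/(p-1)) + (q+1)/2)) ^ q := by
      simp [beta, zero_pow hq0]
    rw [hbet]
    have hx : (σ ^ (i * ((q^2-1)/(p-1)) + (q+1)/2)) ^ q
        = -σ ^ (i * ((q^2-1)/(p-1)) + (q+1)/2) := by
      rw [← pow_mul, hshift _ _ (i*t) (keyq i), pow_add, hneg, mul_neg_one]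
    rw [hx]; ring
  have hptE : ∀ i : ℕ,
      h (mkOmega K q ![σ ^ (i * ((q^2-1)/(p-1)) + (q+1)/2), 0, 1] (hvE _) (h0E i))
        = g (mkOmega K q ![σ ^ (i * ((q^2-1)/(p-1)) + (q+1)/2), 0, 1] (hvE _) (h0E i)) := by
    intro i
    apply Subtype.ext
    rw [hh _ (hvE _) (h0E i), hg _ (hvE _) (h0E i)]
    have e1 : (fun k => (![σ ^ (i * ((q^2-1)/(p-1)) + (q+1)/2), 0, 1] : Fin 3 → K) k ^ p)
        = T ![σ ^ (i * ((q^2-1)/(p-1)) + (q+1)/2), 0, 1] := by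
      have l1 : (fun k => (![σ ^ (i * ((q^2-1)/(p-1)) + (q+1)/2), 0, 1] : Fin 3 → K) k ^ p)
          = ![(σ ^ (i * ((q^2-1)/(p-1)) + (q+1)/2)) ^ p, 0, 1] := by
        funext k; fin_cases k <;> simp [zero_pow hp.pos.ne']
      have l2 : T ![σ ^ (i * ((q^2-1)/(p-1)) + (q+1)/2), 0, 1]
          = ![σ ^ ((q+1)*(p-1)/2) * σ ^ (i * ((q^2-1)/(p-1)) + (q+1)/2), 0, 1] := by
        rw [hT]; funext k; fin_cases k <;> simp
      have l3 : (σ ^ (i * ((q^2-1)/(p-1)) + (q+1)/2)) ^ p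
          = σ ^ ((q+1)*(p-1)/2) * σ ^ (i * ((q^2-1)/(p-1)) + (q+1)/2) := by
        rw [← pow_mul, ← pow_add]
        exact hshift _ _ i (keyp i)
      rw [l1, l2, l3]
    rw [e1]
  -- ## finiteness
  haveI hfinSub : Finite (Submodule K (Fin 3 → K)) :=
    Finite.of_injective (fun W => (W : Set (Fin 3 → K))) SetLike.coe_injective
  haveI hfinOmega : Finite (Omega K q) := by unfold Omega; infer_instance
  -- ## counting
  set D : ℕ := (q ^ 2 - 1) / (p - 1) with hD
  set n0 : ℕ := (q + 1) / 2 with hn0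
  have hDpos : 0 < D := by rw [d4]; exact Nat.mul_pos htpos (by omega)
  have hExInj : ∀ a b : ℕ, 1 ≤ a → a ≤ p - 1 → 1 ≤ b → b ≤ p - 1 →
      σ ^ (a * D + n0) = σ ^ (b * D + n0) → a = b := by
    have key : ∀ a b : ℕ, a ≤ b → 1 ≤ a → b ≤ p - 1 →
        σ ^ (a * D + n0) = σ ^ (b * D + n0) → a = b := by
      intro a b hab ha1 hbp hEq
      obtain ⟨d, rfl⟩ : ∃ d, b = a + d := ⟨b - a, by omega⟩
      rcases Nat.eq_zero_or_pos d with hd0 | hd1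
      · omega
      exfalso
      have hmodeq := hmod _ _ hEq
      have hEb : (a + d) * D + n0 = (a * D + n0) + d * D := by ring
      rw [hEb] at hmodeq
      have hdvd2 : (q ^ 2 - 1) ∣ d * D := by
        have h2 := (Nat.modEq_iff_dvd' (Nat.le_add_right _ _)).mp hmodeq
        simpa using h2
      have hle := Nat.le_of_dvd (Nat.mul_pos hd1 hDpos) hdvd2
      have hd2 : d ≤ p - 2 := by omega
      have hlt1 : d * D ≤ (p - 2) * D := Nat.mul_le_mul_right D hd2
      have hlt2 : (p - 2) * D < (p - 1) * D := by
        apply Nat.mul_lt_mul_of_lt_of_le (by omega) (le_refl D) hDpos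
      have hND : (p - 1) * D = q ^ 2 - 1 := by rw [d4]; exact hNval.symm
      omega
    intro a b ha1 hap hb1 hbp hEq
    rcases le_total a b with hab | hab
    · exact key a b hab ha1 hbp hEq
    · exact (key b a hab hb1 hap hEq.symm).symm
  -- the p+1 candidate points
  have hmain : ∀ k : ℕ, k ≤ p → ∃ (hv : pts K σ p D n0 k ≠ 0)
      (h0 : beta K q (pts K σ p D n0 k) (pts K σ p D n0 k) = 0),
      h (mkOmega K q (pts K σ p D n0 k) hv h0) = g (mkOmega K q (pts K σ p D n0 k) hv h0) := by
    intro k hk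
    by_cases hk0 : k = 0
    · subst hk0
      rw [pts_zero]
      exact ⟨hv1, h01, hpt1⟩
    · by_cases hkp : k = p
      · subst hkp
        rw [pts_self K σ k D n0 (by omega)]
        exact ⟨hv2, h02, hpt2⟩
      · rw [pts_mid K σ p D n0 k hk0 hkp]
        exact ⟨hvE _, h0E k, hptE k⟩
  let φ : Fin (p + 1) → {x : Omega K q | h x = g x} := fun k =>
    ⟨mkOmega K q (pts K σ p D n0 k.1) (hmain k.1 (by omega)).choose
      (hmain k.1 (by omega)).choose_spec.choose,
      (hmain k.1 (by omega)).choose_spec.choose_spec⟩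
  have hφinj : Function.Injective φ := by
    intro a b hab
    have h1 : Submodule.span K {pts K σ p D n0 a.1} = Submodule.span K {pts K σ p D n0 b.1} :=
      congrArg (fun x => x.1.1) hab
    obtain ⟨c, hc⟩ := span_eq_smul K _ _ h1
    have hcomp : ∀ j : Fin 3, pts K σ p D n0 a.1 j = c * pts K σ p D n0 b.1 j := by
      intro j; rw [hc]; simp
    have hap : a.1 ≤ p := by omega
    have hbp : b.1 ≤ p := by omega
    apply Fin.ext
    by_cases ha0 : a.1 = 0 <;> by_cases hb0 : b.1 = 0
    · omega
    · -- a = 0, b ≠ 0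
      exfalso
      have h2 := hcomp 2
      have h0' := hcomp 0
      rw [ha0, pts_zero] at h2 h0'
      by_cases hbpp : b.1 = p
      · rw [hbpp, pts_self K σ p D n0 (by omega)] at h0'
        simp only [Matrix.cons_val_zero, Matrix.cons_val_two, Matrix.tail_cons,
          Matrix.head_cons, mul_zero] at h0'
        exact one_ne_zero h0'
      · rw [pts_mid K σ p D n0 b.1 hb0 hbpp] at h2 h0'
        simp only [Matrix.cons_val_zero, Matrix.cons_val_two, Matrix.tail_cons,
          Matrix.head_cons, mul_one] at h2 h0'
        rw [← h2, zero_mul] at h0'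
        exact one_ne_zero h0'
    · -- a ≠ 0, b = 0
      exfalso
      have h2 := hcomp 2
      rw [hb0, pts_zero] at h2
      by_cases happ : a.1 = p
      · rw [happ, pts_self K σ p D n0 (by omega)] at h2
        simp only [Matrix.cons_val_two, Matrix.tail_cons, Matrix.head_cons, mul_zero] at h2
        exact one_ne_zero h2
      · rw [pts_mid K σ p D n0 a.1 ha0 happ] at h2
        simp only [Matrix.cons_val_two, Matrix.tail_cons, Matrix.head_cons, mul_zero] at h2
        exact one_ne_zero h2
    · -- both nonzero
      by_cases happ : a.1 = p <;> by_cases hbpp : b.1 = p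
      · omega
      · exfalso
        have h2 := hcomp 2
        have h0' := hcomp 0
        rw [happ, pts_self K σ p D n0 (by omega),
          pts_mid K σ p D n0 b.1 hb0 hbpp] at h2 h0'
        simp only [Matrix.cons_val_zero, Matrix.cons_val_two, Matrix.tail_cons,
          Matrix.head_cons, mul_one, mul_zero] at h2 h0'
        rw [← h2, one_mul] at h0'
        exact pow_ne_zero _ hσ0 h0'.symm
      · exfalso
        have h0' := hcomp 0
        rw [hbpp, pts_self K σ p D n0 (by omega),
          pts_mid K σ p D n0 a.1 ha0 happ] at h0'
        simp only [Matrix.cons_val_zero, mul_zero] at h0'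
        exact pow_ne_zero _ hσ0 h0'
      · -- both middle
        have h2 := hcomp 2
        have h0' := hcomp 0
        rw [pts_mid K σ p D n0 a.1 ha0 happ, pts_mid K σ p D n0 b.1 hb0 hbpp] at h2 h0'
        simp only [Matrix.cons_val_zero, Matrix.cons_val_two, Matrix.tail_cons,
          Matrix.head_cons, mul_one] at h2 h0'
        rw [← h2, one_mul] at h0'
        exact hExInj a.1 b.1 (by omega) (by omega) (by omega) (by omega) h0'
  have hcount : p + 1 ≤ Nat.card {x : Omega K q | h x = g x} := by
    calc p + 1 = Nat.card (Fin (p + 1)) := by simp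
    _ ≤ Nat.card {x : Omega K q | h x = g x} := Nat.card_le_card_of_injective φ hφinj
  refine ⟨⟨σ ^ ((q+1)*(p-1)/2), hc0, hpres⟩, ⟨T, σ ^ ((q+1)*(p-1)/2), hc0, hpres, hg⟩,
    ⟨hv1, h01, hpt1⟩, ⟨hv2, h02, hpt2⟩, fun i _ _ => ⟨hvE _, h0E i, hptE i⟩, hcount⟩


end Stmt4
end
end

section
/- Let q = 2^{2m+1} and ℓ = 2^{m+1}. For each κ ∈ F_q×, the permutation y_κ h⁻¹ of Ω fixes exactly 5 points: ∞ together with the four points (0,0,0), (0,κ^{ℓ+1},κ^{ℓ+2}), (κ,0,κ^{ℓ+2}), (κ,κ^{ℓ+1},κ^{ℓ+2}). Consequently d_{q²+1}(h, y_κ) = q² − 4 for every κ ∈ F_q×. -/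
/-!
Write `ℓ = 2^{m+1}`, so that `ℓ² = 2q` and hence `x^{ℓ²} = x²` on `F_q`; in particular
`(κ^{ℓ+1})^ℓ = κ^{ℓ+2}`. A finite point `(a,b,c)` is fixed by `y_κ h⁻¹` iff `κa = a²`,
`κ^{ℓ+1}b = b²` and `κ^{ℓ+2}c = c²`, i.e. iff `a ∈ {0, κ}` and `b ∈ {0, κ^{ℓ+1}}`: for these
four choices the surface equation gives `c ∈ {0, κ^{ℓ+2}}` (using characteristic `2` and the
identity above), so the third condition is automatic. Since a point of the surface is
determined by `(a, b)`, this yields exactly four finite fixed points, plus `∞`.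
-/

open scoped Classical

noncomputable section

namespace Stmt6

variable (K : Type*) [Field K]

/-- The Suzuki–Tits surface `{(a,b,c) ∈ F_q³ : c = ab + a^{ℓ+2} + b^ℓ}` with `ℓ = 2^{m+1}`. -/
def SzSurface (m : ℕ) : Type _ :=
  {x : K × K × K // x.2.2 = x.1 * x.2.1 + x.1 ^ (2 ^ (m + 1) + 2) + x.2.1 ^ 2 ^ (m + 1)}

/-- `Ω = SzSurface ∪ {∞}`, with `∞` modelled by `none`. -/
def SzOmega (m : ℕ) : Type _ := Option (SzSurface K m)

/-- `h` is the permutation of `Ω` with `∞^h = ∞` and `(a,b,c)^h = (a²,b²,c²)`. -/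
def IsSzFrob (m : ℕ) (h : Equiv.Perm (SzOmega K m)) : Prop :=
  h none = none ∧
    ∀ s : SzSurface K m, (h (some s)).map Subtype.val =
      some (s.val.1 ^ 2, s.val.2.1 ^ 2, s.val.2.2 ^ 2)

/-- `y_κ` is the permutation of `Ω` with `∞^{y_κ} = ∞` and
`(a,b,c)^{y_κ} = (κa, κ^{ℓ+1}b, κ^{ℓ+2}c)`. -/
def IsSzDiag (m : ℕ) (κ : K) (y : Equiv.Perm (SzOmega K m)) : Prop :=
  y none = none ∧
    ∀ s : SzSurface K m, (y (some s)).map Subtype.val =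
      some (κ * s.val.1, κ ^ (2 ^ (m + 1) + 1) * s.val.2.1,
        κ ^ (2 ^ (m + 1) + 2) * s.val.2.2)

/-- Hamming distance between two permutations: `d(g,h) = n - |fix(gh⁻¹)|`, where
`fix(gh⁻¹)` (permutations acting on the right) is the set of points on which `g` and
`h` agree. -/
def hdist {Ω : Type*} (g h : Equiv.Perm Ω) : ℕ :=
  Nat.card Ω - Nat.card {x : Ω | g x = h x}

section

variable {K : Type*} [Field K] {m : ℕ}

local notation "ℓ" => 2 ^ (m + 1)

theorem Option.mem_insert_none_image_some_iff {α : Type*} {x : Option α} {P : Set α} :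
    x ∈ insert none (some '' P) ↔ x = none ∨ ∃ a, x = some a ∧ a ∈ P := by
  simp [eq_comm, and_comm]

theorem hdist_comm {Ω : Type*} (g h : Equiv.Perm Ω) : hdist g h = hdist h g := by
  simp only [hdist, eq_comm]

theorem pow_ell_mul_ell [Fintype K] (hK : Fintype.card K = 2 ^ (2 * m + 1)) (x : K) :
    x ^ (ℓ * ℓ) = x ^ 2 := by
  rw [← pow_add, show m + 1 + (m + 1) = 2 * m + 1 + 1 by ring, pow_succ, pow_mul, ← hK,
    FiniteField.pow_card]

theorem pow_ell_add_one_pow_ell [Fintype K] (hK : Fintype.card K = 2 ^ (2 * m + 1)) (x : K) :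
    (x ^ (ℓ + 1)) ^ ℓ = x ^ (ℓ + 2) := by
  rw [← pow_mul, add_mul, one_mul, pow_add, pow_ell_mul_ell hK, ← pow_add, add_comm]

variable (K m) in
def szSurfaceEquiv : SzSurface K m ≃ K × K where
  toFun s := (s.val.1, s.val.2.1)
  invFun p := ⟨(p.1, p.2, p.1 * p.2 + p.1 ^ (ℓ + 2) + p.2 ^ ℓ), rfl⟩
  left_inv s := Subtype.ext (Prod.ext rfl (Prod.ext rfl s.2.symm))
  right_inv _ := rfl

@[simp]
theorem szSurfaceEquiv_apply (s : SzSurface K m) :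
    szSurfaceEquiv K m s = (s.val.1, s.val.2.1) :=
  rfl

instance [Finite K] : Finite (SzSurface K m) :=
  .of_equiv _ (szSurfaceEquiv K m).symm

theorem card_szOmega [Finite K] : Nat.card (SzOmega K m) = Nat.card K ^ 2 + 1 := by
  rw [SzOmega, Finite.card_option, Nat.card_congr (szSurfaceEquiv K m), Nat.card_prod, sq]

theorem IsSzDiag.apply_some_eq_iff {κ : K} {h y : Equiv.Perm (SzOmega K m)}
    (hy : IsSzDiag K m κ y) (hh : IsSzFrob K m h) (s : SzSurface K m) :
    y (some s) = h (some s) ↔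
      (κ * s.val.1, κ ^ (ℓ + 1) * s.val.2.1, κ ^ (ℓ + 2) * s.val.2.2) =
        (s.val.1 ^ 2, s.val.2.1 ^ 2, s.val.2.2 ^ 2) := by
  refine (Option.map_injective (f := Subtype.val) Subtype.val_injective).eq_iff.symm.trans ?_
  rw [hy.2, hh.2, Option.some_inj]

variable [Fintype K] [CharP K 2] (hK : Fintype.card K = 2 ^ (2 * m + 1)) {κ : K}
include hK

theorem szSurfaceEquiv_mem_iff (s : SzSurface K m) :
    szSurfaceEquiv K m s ∈ ({0, κ} : Set K) ×ˢ ({0, κ ^ (ℓ + 1)} : Set K) ↔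
      s.val = (0, 0, 0) ∨ s.val = (0, κ ^ (ℓ + 1), κ ^ (ℓ + 2)) ∨
        s.val = (κ, 0, κ ^ (ℓ + 2)) ∨ s.val = (κ, κ ^ (ℓ + 1), κ ^ (ℓ + 2)) := by
  rw [szSurfaceEquiv_apply]
  obtain ⟨⟨a, b, c⟩, hs⟩ := s
  dsimp only at hs ⊢
  subst hs
  have hκ := pow_ell_add_one_pow_ell hK κ
  have hκ' : κ * κ ^ (ℓ + 1) = κ ^ (ℓ + 2) := by ring
  have h0 : (0 : K) ^ ℓ = 0 := zero_pow (by positivity)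
  have h0' : (0 : K) ^ (ℓ + 2) = 0 := zero_pow (by positivity)
  simp only [Set.mem_prod, Set.mem_insert_iff, Set.mem_singleton_iff, Prod.mk.injEq]
  constructor
  · rintro ⟨rfl | rfl, rfl | rfl⟩ <;> simp [hκ, hκ', h0, h0', CharTwo.add_self_eq_zero]
  · rintro (⟨rfl, rfl, -⟩ | ⟨rfl, rfl, -⟩ | ⟨rfl, rfl, -⟩ | ⟨rfl, rfl, -⟩) <;> simp

theorem szDiag_val_eq_szFrob_val_iff (s : SzSurface K m) :
    (κ * s.val.1, κ ^ (ℓ + 1) * s.val.2.1, κ ^ (ℓ + 2) * s.val.2.2) =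
        (s.val.1 ^ 2, s.val.2.1 ^ 2, s.val.2.2 ^ 2) ↔
      szSurfaceEquiv K m s ∈ ({0, κ} : Set K) ×ˢ ({0, κ ^ (ℓ + 1)} : Set K) := by
  constructor
  · simp only [Prod.mk.injEq, sq, mul_eq_mul_right_iff]
    rintro ⟨ha, hb, -⟩
    exact ⟨(ha.imp_left Eq.symm).symm, (hb.imp_left Eq.symm).symm⟩
  · intro hs
    rcases (szSurfaceEquiv_mem_iff hK s).1 hs with hs | hs | hs | hs <;> simp [hs, sq]

theorem IsSzDiag.setOf_apply_eq_apply {h y : Equiv.Perm (SzOmega K m)}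
    (hy : IsSzDiag K m κ y) (hh : IsSzFrob K m h) :
    {x : Option (SzSurface K m) | y x = h x} =
      insert none (some '' (szSurfaceEquiv K m ⁻¹' (({0, κ} : Set K) ×ˢ {0, κ ^ (ℓ + 1)}))) := by
  ext (_ | s)
  · exact iff_of_true (hy.1.trans hh.1.symm) (Set.mem_insert _ _)
  · simp [hy.apply_some_eq_iff hh, szDiag_val_eq_szFrob_val_iff hK]

end

/-- For each `κ ∈ F_q×`, the permutation `y_κ h⁻¹` of `Ω` fixes exactly `5` points:
`∞` together with four explicitly listed points; consequently
`d_{q²+1}(h, y_κ) = q² - 4`. (A point is fixed by `y_κ h⁻¹`, permutations acting on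
the right, precisely when `y_κ` and `h` agree on it.) -/
theorem suzuki_fixed_points
    (m : ℕ) (K : Type*) [Field K] [Fintype K]
    (hK : Fintype.card K = 2 ^ (2 * m + 1))
    (κ : K) (hκ : κ ≠ 0)
    (h : Equiv.Perm (SzOmega K m)) (hh : IsSzFrob K m h)
    (y : Equiv.Perm (SzOmega K m)) (hy : IsSzDiag K m κ y) :
    (∀ x : SzOmega K m, y x = h x ↔
      x = none ∨ ∃ s : SzSurface K m, x = some s ∧
        (s.val = (0, 0, 0) ∨
         s.val = (0, κ ^ (2 ^ (m + 1) + 1), κ ^ (2 ^ (m + 1) + 2)) ∨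
         s.val = (κ, 0, κ ^ (2 ^ (m + 1) + 2)) ∨
         s.val = (κ, κ ^ (2 ^ (m + 1) + 1), κ ^ (2 ^ (m + 1) + 2)))) ∧
    Nat.card {x : SzOmega K m | y x = h x} = 5 ∧
    hdist h y = (2 ^ (2 * m + 1)) ^ 2 - 4 := by
  have : CharP K 2 := charP_of_card_eq_prime_pow hK
  have hfixed := hy.setOf_apply_eq_apply hK hh
  have hcard : Nat.card {x : SzOmega K m | y x = h x} = 5 := by
    -- `SzOmega` does not unfold for `rw`, so restate the set over `Option`.
    change Nat.card {x : Option (SzSurface K m) | y x = h x} = 5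
    rw [Nat.card_coe_set_eq, hfixed, Set.ncard_insert_of_notMem (by simp),
      Set.ncard_image_of_injective _ (Option.some_injective _),
      Set.ncard_preimage_of_injective_subset_range (Equiv.injective _) (by simp),
      Set.ncard_prod, Set.ncard_pair hκ.symm, Set.ncard_pair (pow_ne_zero _ hκ).symm]
  refine ⟨fun x => ?_, hcard, ?_⟩
  · exact (Set.ext_iff.1 hfixed x).trans <| Option.mem_insert_none_image_some_iff.trans <|
      or_congr_right <| exists_congr fun s => and_congr_right fun _ => szSurfaceEquiv_mem_iff hK s
  · rw [hdist_comm, hdist, hcard, card_szOmega, Nat.card_eq_fintype_card, hK]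
    omega

end Stmt6
end
end

section
/- Let q = 3^{2m+1} and ℓ = 3^{m+1}. For each κ ∈ F_q×, the permutation y_κ h⁻¹ of Ω fixes at most 28 points. Moreover, for κ = 1 (so y_1 is the identity), h⁻¹ fixes exactly 28 points of Ω: ∞ together with the 27 points whose parameters (a,b,c) satisfy a³ = a, b³ = b, c³ = c. Consequently d_{q³+1}(h, y_1) = q³ − 27. -/
open scoped Classical

noncomputable section

namespace Stmt7

variable (K : Type*) [Field K]

/-- `λ₁(a,b,c) = a²b - ac + b^ℓ - a^{ℓ+3}` with `ℓ = 3^{m+1}`. -/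
def lam1 (m : ℕ) (a b c : K) : K :=
  a ^ 2 * b - a * c + b ^ 3 ^ (m + 1) - a ^ (3 ^ (m + 1) + 3)

/-- `λ₂(a,b,c) = a^ℓb^ℓ - c^ℓ + ab² + bc - a^{2ℓ+3}`. -/
def lam2 (m : ℕ) (a b c : K) : K :=
  a ^ 3 ^ (m + 1) * b ^ 3 ^ (m + 1) - c ^ 3 ^ (m + 1) + a * b ^ 2 + b * c -
    a ^ (2 * 3 ^ (m + 1) + 3)

/-- `λ₃(a,b,c) = ac^ℓ - a^{ℓ+1}b^ℓ + a^{ℓ+3}b + a²b² - b^{ℓ+1} - c² + a^{2ℓ+4}`. -/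
def lam3 (m : ℕ) (a b c : K) : K :=
  a * c ^ 3 ^ (m + 1) - a ^ (3 ^ (m + 1) + 1) * b ^ 3 ^ (m + 1) +
    a ^ (3 ^ (m + 1) + 3) * b + a ^ 2 * b ^ 2 - b ^ (3 ^ (m + 1) + 1) - c ^ 2 +
    a ^ (2 * 3 ^ (m + 1) + 4)

/-- The Ree–Tits set `{(a,b,c,λ₁(a,b,c),λ₂(a,b,c),λ₃(a,b,c)) : (a,b,c) ∈ F_q³}`. -/
def ReeSurface (m : ℕ) : Type _ :=
  {x : (K × K × K) × (K × K × K) //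
    x.2 = (lam1 K m x.1.1 x.1.2.1 x.1.2.2, lam2 K m x.1.1 x.1.2.1 x.1.2.2,
      lam3 K m x.1.1 x.1.2.1 x.1.2.2)}

/-- `Ω = ReeSurface ∪ {∞}`, with `∞` modelled by `none`. -/
def ReeOmega (m : ℕ) : Type _ := Option (ReeSurface K m)

/-- `h` fixes `∞` and sends the point with parameters `(a,b,c)` to the point with
parameters `(a³,b³,c³)`. -/
def IsReeFrob (m : ℕ) (h : Equiv.Perm (ReeOmega K m)) : Prop :=
  h none = none ∧
    ∀ s : ReeSurface K m, (h (some s)).map (fun t => t.val.1) =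
      some (s.val.1.1 ^ 3, s.val.1.2.1 ^ 3, s.val.1.2.2 ^ 3)

/-- `y_κ` fixes `∞` and sends the point with parameters `(a,b,c)` to the point with
parameters `(κa, κ^{ℓ+1}b, κ^{ℓ+2}c)`, where `ℓ = 3^{m+1}`. -/
def IsReeDiag (m : ℕ) (κ : K) (y : Equiv.Perm (ReeOmega K m)) : Prop :=
  y none = none ∧
    ∀ s : ReeSurface K m, (y (some s)).map (fun t => t.val.1) =
      some (κ * s.val.1.1, κ ^ (3 ^ (m + 1) + 1) * s.val.1.2.1,
        κ ^ (3 ^ (m + 1) + 2) * s.val.1.2.2)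

/-- Hamming distance between two permutations: `d(g,h) = n - |fix(gh⁻¹)|`, where
`fix(gh⁻¹)` (permutations acting on the right) is the set of points on which `g` and
`h` agree. -/
def hdist {Ω : Type*} (g h : Equiv.Perm Ω) : ℕ :=
  Nat.card Ω - Nat.card {x : Ω | g x = h x}

/-!
Both `h` and `y_κ` fix `∞` and act coordinatewise on the parameters `(a,b,c)`, which determine
a point of the surface. Hence `y_κ` and `h` agree at `(a,b,c)` exactly when `a³ = κa`,
`b³ = κ^{ℓ+1}b` and `c³ = κ^{ℓ+2}c`. Over a domain each equation `x³ = cx` has at most three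
solutions, and for `κ = 1` in characteristic `3` it has exactly the three solutions `0, ±1`.
-/

section CubicRoots

variable {R : Type*} [CommRing R] [IsDomain R]

open Polynomial in
theorem ncard_setOf_pow_three_eq_mul_le (c : R) :
    {a : R | a ^ 3 = c * a}.ncard ≤ 3 := by
  have hdeg : (X ^ 3 - C c * X : R[X]).natDegree = 3 := by compute_degree!
  have hne : (X ^ 3 - C c * X : R[X]) ≠ 0 := fun h0 => by simp [h0] at hdeg
  calc {a : R | a ^ 3 = c * a}.ncard ≤ ((X ^ 3 - C c * X : R[X]).rootSet R).ncard :=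
        Set.ncard_le_ncard fun a ha => mem_rootSet.mpr ⟨hne, by simp [Set.mem_ofPred.mp ha]⟩
    _ ≤ 3 := (ncard_rootSet_le _ R).trans hdeg.le

theorem ncard_setOf_pow_three_eq_self (h3 : (3 : R) = 0) : {a : R | a ^ 3 = a}.ncard = 3 := by
  have h2 : (2 : R) ≠ 0 := fun h2 => one_ne_zero (by linear_combination h3 - h2 : (1 : R) = 0)
  refine Set.ncard_eq_three.mpr ⟨0, 1, -1, zero_ne_one, ?_, ?_, ?_⟩
  · exact fun h => one_ne_zero (neg_eq_zero.mp h.symm)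
  · exact fun h => h2 (by linear_combination h)
  · ext a
    simp only [Set.mem_ofPred_eq, Set.mem_insert_iff, Set.mem_singleton_iff]
    constructor
    · intro ha
      have hfac : a * ((a - 1) * (a + 1)) = 0 := by linear_combination ha
      rcases mul_eq_zero.mp hfac with h0 | hfac
      · exact .inl h0
      rcases mul_eq_zero.mp hfac with h1 | h1
      · exact .inr (.inl (sub_eq_zero.mp h1))
      · exact .inr (.inr (eq_neg_of_add_eq_zero_left h1))
    · rintro (rfl | rfl | rfl) <;> ring

end CubicRoots

variable {K}

theorem ReeSurface.ext {m : ℕ} {s t : ReeSurface K m} (hst : s.val.1 = t.val.1) : s = t :=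
  Subtype.ext (Prod.ext hst (by rw [s.2, t.2, hst]))

def ReeSurface.params (m : ℕ) : ReeSurface K m ≃ K × K × K where
  toFun s := s.val.1
  invFun p := ⟨(p, (lam1 K m p.1 p.2.1 p.2.2, lam2 K m p.1 p.2.1 p.2.2,
    lam3 K m p.1 p.2.1 p.2.2)), rfl⟩
  left_inv _ := ReeSurface.ext rfl
  right_inv _ := rfl

instance [Finite K] (m : ℕ) : Finite (ReeSurface K m) :=
  .of_equiv _ (ReeSurface.params m).symm

instance [Finite K] (m : ℕ) : Finite (ReeOmega K m) :=
  inferInstanceAs (Finite (Option _))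

theorem card_reeOmega [Finite K] (m : ℕ) :
    Nat.card (ReeOmega K m) = Nat.card K ^ 3 + 1 := by
  rw [ReeOmega, Finite.card_option, Nat.card_congr (ReeSurface.params m), Nat.card_prod,
    Nat.card_prod]
  ring

section Coincidence

variable {m : ℕ} {κ : K} {h y : Equiv.Perm (ReeOmega K m)}

theorem IsReeDiag.apply_some_eq_iff (hy : IsReeDiag K m κ y) (hh : IsReeFrob K m h)
    (s : ReeSurface K m) :
    y (some s) = h (some s) ↔ s.val.1.1 ^ 3 = κ * s.val.1.1 ∧
      s.val.1.2.1 ^ 3 = κ ^ (3 ^ (m + 1) + 1) * s.val.1.2.1 ∧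
      s.val.1.2.2 ^ 3 = κ ^ (3 ^ (m + 1) + 2) * s.val.1.2.2 := by
  obtain ⟨t, hht, ht⟩ := Option.map_eq_some_iff.mp (hh.2 s)
  obtain ⟨u, hyu, hu⟩ := Option.map_eq_some_iff.mp (hy.2 s)
  rw [hht, hyu]
  refine Option.some_inj.trans ⟨fun hut => ?_, fun hs => ReeSurface.ext ?_⟩
  · have := hu.symm.trans ((congrArg (·.val.1) hut).trans ht)
    simp only [Prod.mk.injEq] at this
    exact ⟨this.1.symm, this.2.1.symm, this.2.2.symm⟩
  · rw [hu, ht, hs.1, hs.2.1, hs.2.2]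

theorem IsReeDiag.apply_eq_iff (hy : IsReeDiag K m κ y) (hh : IsReeFrob K m h)
    (x : ReeOmega K m) :
    y x = h x ↔ x = none ∨ ∃ s : ReeSurface K m, x = some s ∧
      s.val.1.1 ^ 3 = κ * s.val.1.1 ∧
      s.val.1.2.1 ^ 3 = κ ^ (3 ^ (m + 1) + 1) * s.val.1.2.1 ∧
      s.val.1.2.2 ^ 3 = κ ^ (3 ^ (m + 1) + 2) * s.val.1.2.2 := by
  cases x with
  | none => simp [hh.1, hy.1]
  | some s =>
    rw [hy.apply_some_eq_iff hh]
    constructor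
    · exact fun hs => .inr ⟨s, rfl, hs⟩
    · rintro (hs | ⟨t, hst, ht⟩)
      · cases hs
      · cases Option.some_injective _ hst
        exact ht

theorem IsReeDiag.setOf_apply_eq_eq (hy : IsReeDiag K m κ y) (hh : IsReeFrob K m h) :
    {x : Option (ReeSurface K m) | y x = h x} = insert none (some '' (ReeSurface.params m ⁻¹'
      ({a | a ^ 3 = κ * a} ×ˢ {b | b ^ 3 = κ ^ (3 ^ (m + 1) + 1) * b} ×ˢ
        {c | c ^ 3 = κ ^ (3 ^ (m + 1) + 2) * c}))) := by
  ext x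
  cases x with
  | none => exact iff_of_true (hy.1.trans hh.1.symm) (Set.mem_insert _ _)
  | some s =>
    refine (hy.apply_some_eq_iff hh s).trans ?_
    rw [Set.mem_insert_iff, or_iff_right (Option.some_ne_none s),
      (Option.some_injective _).mem_set_image]
    rfl

theorem IsReeDiag.card_setOf_apply_eq [Finite K] (hy : IsReeDiag K m κ y)
    (hh : IsReeFrob K m h) :
    Nat.card {x | y x = h x} = {a | a ^ 3 = κ * a}.ncard *
      ({b | b ^ 3 = κ ^ (3 ^ (m + 1) + 1) * b}.ncard *
        {c | c ^ 3 = κ ^ (3 ^ (m + 1) + 2) * c}.ncard) + 1 := by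
  change Nat.card {x : Option (ReeSurface K m) | y x = h x} = _
  rw [Nat.card_coe_set_eq, hy.setOf_apply_eq_eq hh, Set.ncard_insert_of_notMem (by simp),
    Set.ncard_image_of_injective _ (Option.some_injective _),
    Set.ncard_preimage_of_injective_subset_range (ReeSurface.params m).injective (by simp),
    Set.ncard_prod, Set.ncard_prod]

end Coincidence

/-- For each `κ ∈ F_q×` the permutation `y_κ h⁻¹` of `Ω` fixes at most `28` points;
for `κ = 1` it fixes exactly `28` points, namely `∞` together with the `27` points whose
parameters satisfy `a³ = a`, `b³ = b`, `c³ = c`; consequently `d_{q³+1}(h,y₁) = q³ - 27`.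
(A point is fixed by `y_κ h⁻¹`, permutations acting on the right, precisely when `y_κ`
and `h` agree on it.) -/
theorem ree_fixed_points
    (m : ℕ) (K : Type*) [Field K] [Fintype K]
    (hK : Fintype.card K = 3 ^ (2 * m + 1))
    (h : Equiv.Perm (ReeOmega K m)) (hh : IsReeFrob K m h) :
    (∀ κ : K, κ ≠ 0 → ∀ y : Equiv.Perm (ReeOmega K m), IsReeDiag K m κ y →
      Nat.card {x : ReeOmega K m | y x = h x} ≤ 28) ∧
    ∀ y : Equiv.Perm (ReeOmega K m), IsReeDiag K m 1 y →
      (∀ x : ReeOmega K m, y x = h x ↔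
        x = none ∨ ∃ s : ReeSurface K m, x = some s ∧
          s.val.1.1 ^ 3 = s.val.1.1 ∧ s.val.1.2.1 ^ 3 = s.val.1.2.1 ∧
          s.val.1.2.2 ^ 3 = s.val.1.2.2) ∧
      Nat.card {x : ReeOmega K m | y x = h x} = 28 ∧
      hdist h y = (3 ^ (2 * m + 1)) ^ 3 - 27 := by
  refine ⟨fun κ _ y hy => ?_, fun y hy => ?_⟩
  · rw [hy.card_setOf_apply_eq hh]
    have := ncard_setOf_pow_three_eq_mul_le κ
    have := ncard_setOf_pow_three_eq_mul_le (κ ^ (3 ^ (m + 1) + 1))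
    have := ncard_setOf_pow_three_eq_mul_le (κ ^ (3 ^ (m + 1) + 2))
    calc _ ≤ 3 * (3 * 3) + 1 := by gcongr
      _ = 28 := rfl
  have h3 : (3 : K) = 0 := by
    have hq := FiniteField.cast_card_eq_zero K
    rw [hK, Nat.cast_pow, Nat.cast_ofNat] at hq
    exact pow_eq_zero_iff (by omega) |>.mp hq
  have hfix : Nat.card {x | y x = h x} = 28 := by
    simp only [hy.card_setOf_apply_eq hh, one_pow, one_mul,
      ncard_setOf_pow_three_eq_self h3]
  refine ⟨by simpa only [one_pow, one_mul] using hy.apply_eq_iff hh, hfix, ?_⟩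
  have hagree : {x | h x = y x} = {x | y x = h x} := Set.ext fun _ => eq_comm
  rw [hdist, hagree, hfix, card_reeOmega, Nat.card_eq_fintype_card, hK]
  omega

end Stmt7
end
end

section
/- Let P₁, P₂ be points of the Hermitian curve H(2,q²). Then a point X ⊗ Y of U_{2,2} (with X, Y ∈ H(2,q²)) is orthogonal to or equal to P₁ ⊗ P₂ with respect to β ⊗ β if and only if X = P₁ or Y = P₂. That is, the set of points of U_{2,2} orthogonal with or equal to P₁ ⊗ P₂ is {P₁ ⊗ X : X ∈ H(2,q²)} ∪ {X ⊗ P₂ : X ∈ H(2,q²)}. -/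
/-!
If isotropic `x`, `p` with `β(x, p) = 0` were independent, the functionals `β(·, x)` and
`β(·, p)` would both vanish on the plane `⟨x, p⟩`, whose annihilator is a line in dimension 3.
Hence `β(·, p) = a β(·, x)`, so `β(p, ·) = a^q β(x, ·)` and nondegeneracy gives `p = a^q x`.
Thus the only point of the curve orthogonal to a point `P` of the curve is `P` itself, while
`x ⊗ y = c (p₁ ⊗ p₂)` forces `x ∈ ⟨p₁⟩` (apply a functional to the second factor).
-/

open scoped TensorProduct

namespace Stmt10

open Module

theorem exists_eq_smul_of_tmul_eq_tmul {K V W : Type*} [Field K] [AddCommGroup V] [Module K V]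
    [AddCommGroup W] [Module K W] {x x' : V} {y y' : W} (h : x ⊗ₜ[K] y = x' ⊗ₜ[K] y')
    (hy : y ≠ 0) : ∃ c : K, x = c • x' := by
  obtain ⟨φ, hφ⟩ := Projective.exists_dual_eq_one K hy
  refine ⟨φ y', ?_⟩
  simpa [hφ] using congrArg (fun t => TensorProduct.rid K V (LinearMap.lTensor V φ t)) h

theorem exists_smul_eq_of_mem_of_finrank_le_one {K M : Type*} [Field K] [AddCommGroup M]
    [Module K M] {S : Submodule K M} [FiniteDimensional K S] (hS : finrank K S ≤ 1)
    {f g : M} (hf : f ∈ S) (hg : g ∈ S) (hf0 : f ≠ 0) : ∃ a : K, a • f = g := by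
  by_contra! h
  have hspan : finrank K (Submodule.span K (Set.range ![f, g])) = 2 := by
    simpa using finrank_span_eq_card ((LinearIndependent.pair_iff' hf0).2 h)
  have hle : Submodule.span K (Set.range ![f, g]) ≤ S := by
    rw [Submodule.span_le, Set.range_subset_iff, Fin.forall_fin_two]
    exact ⟨hf, hg⟩
  have := Submodule.finrank_mono hle
  omega

theorem exists_eq_smul_of_isotropic_of_orthogonal {K V : Type*} [Field K] [AddCommGroup V]
    [Module K V] [FiniteDimensional K V] (hV : finrank K V ≤ 3) {β : V →ₗ[K] V → K}
    (σ : K →*₀ K) (hσ : ∀ x y, β y x = σ (β x y)) (hβ : LinearMap.ker β = ⊥) {x p : V}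
    (hp : p ≠ 0) (hpp : β p p = 0) (hxx : β x x = 0) (hxp : β x p = 0) :
    ∃ c : K, x = c • p := by
  by_contra! hxp'
  have hli : LinearIndependent K ![x, p] :=
    linearIndependent_fin2.2 ⟨hp, fun a h => hxp' a h.symm⟩
  have hx : x ≠ 0 := fun h => hxp' 0 (by simp [h])
  have hpx : β p x = 0 := by rw [hσ, hxp, map_zero]
  let W := Submodule.span K (Set.range ![x, p])
  have hW : finrank K W = 2 := by simpa using finrank_span_eq_card hli
  have hann : finrank K W.dualAnnihilator ≤ 1 := by
    have := Subspace.finrank_add_finrank_dualAnnihilator_eq W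
    omega
  let r (w : V) : Dual K V := LinearMap.proj w ∘ₗ β
  have hr {w : V} (hxw : β x w = 0) (hpw : β p w = 0) : r w ∈ W.dualAnnihilator := by
    rw [← SetLike.mem_coe, Submodule.coe_dualAnnihilator_span, Set.mem_ofPred_eq,
      Set.range_subset_iff, Fin.forall_fin_two]
    exact ⟨hxw, hpw⟩
  have hrx : r x ≠ 0 := by
    intro h
    refine hx (LinearMap.ker_eq_bot'.1 hβ x (funext fun v => ?_))
    rw [hσ, show β v x = 0 from LinearMap.congr_fun h v, map_zero, Pi.zero_apply]
  obtain ⟨a, ha⟩ := exists_smul_eq_of_mem_of_finrank_le_one hann (hr hxx hpx) (hr hxp hpp) hrx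
  have hpa : p = σ a • x := by
    refine sub_eq_zero.1 (LinearMap.ker_eq_bot'.1 hβ _ (funext fun v => ?_))
    have hv : β v p = a * β v x := (LinearMap.congr_fun ha v).symm
    simp [hσ v p, hσ v x, hv]
  exact (LinearIndependent.pair_iff' hx).1 hli (σ a) hpa.symm

theorem orthogonal_or_equal_iff_general
    (q : ℕ) (hq : IsPrimePow q)
    (K : Type*) [Field K]
    (β : (Fin 3 → K) → (Fin 3 → K) → K)
    (βadd : ∀ x x' y, β (x + x') y = β x y + β x' y)
    (βsmul : ∀ (a : K) (x y), β (a • x) y = a * β x y)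
    (βconj : ∀ x y, β y x = β x y ^ q)
    (βnondeg : ∀ x, (∀ y, β x y = 0) → x = 0)
    (p₁ p₂ : Fin 3 → K) (hp₁ : p₁ ≠ 0) (hp₂ : p₂ ≠ 0)
    (hp₁i : β p₁ p₁ = 0) (hp₂i : β p₂ p₂ = 0)
    (x y : Fin 3 → K) (hy : y ≠ 0)
    (hxi : β x x = 0) (hyi : β y y = 0) :
    (β x p₁ * β y p₂ = 0 ∨
        ∃ c : K, c ≠ 0 ∧ x ⊗ₜ[K] y = c • (p₁ ⊗ₜ[K] p₂)) ↔
      ((∃ c : K, x = c • p₁) ∨ (∃ c : K, y = c • p₂)) := by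
  let B : (Fin 3 → K) →ₗ[K] (Fin 3 → K) → K :=
    { toFun := β
      map_add' := fun x x' => funext (βadd x x')
      map_smul' := fun a x => funext (βsmul a x) }
  have tangent {p z : Fin 3 → K} (hp : p ≠ 0) (hpp : β p p = 0) (hzz : β z z = 0)
      (hzp : β z p = 0) : ∃ c : K, z = c • p :=
    exists_eq_smul_of_isotropic_of_orthogonal (by simp) (β := B) (powMonoidWithZeroHom hq.pos.ne')
      βconj (LinearMap.ker_eq_bot'.2 fun v hv => βnondeg v fun w => congrFun hv w) hp hpp hzz hzp
  constructor
  · rintro (h | ⟨c, -, hten⟩)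
    · rcases mul_eq_zero.mp h with h | h
      · exact .inl (tangent hp₁ hp₁i hxi h)
      · exact .inr (tangent hp₂ hp₂i hyi h)
    · obtain ⟨d, rfl⟩ :=
        exists_eq_smul_of_tmul_eq_tmul (hten.trans (TensorProduct.smul_tmul' ..)) hy
      exact .inl ⟨d * c, smul_smul ..⟩
  · rintro (⟨c, rfl⟩ | ⟨c, rfl⟩) <;> left <;> simp [βsmul, hp₁i, hp₂i]

/-- Let `P₁ = ⟨p₁⟩`, `P₂ = ⟨p₂⟩` be points of the Hermitian curve `H(2,q²)`. A point
`X ⊗ Y = ⟨x ⊗ y⟩` of `U_{2,2}` is orthogonal to or equal to `P₁ ⊗ P₂` with respect to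
`β ⊗ β` (orthogonality on simple tensors meaning `β(x,p₁)β(y,p₂) = 0`) if and only if
`X = P₁` or `Y = P₂`. -/
theorem orthogonal_or_equal_iff
    (q : ℕ) (hq : IsPrimePow q)
    (K : Type*) [Field K] [Fintype K] (hK : Fintype.card K = q ^ 2)
    (β : (Fin 3 → K) → (Fin 3 → K) → K)
    (βadd : ∀ x x' y, β (x + x') y = β x y + β x' y)
    (βsmul : ∀ (a : K) (x y), β (a • x) y = a * β x y)
    (βconj : ∀ x y, β y x = β x y ^ q)
    (βnondeg : ∀ x, (∀ y, β x y = 0) → x = 0)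
    (p₁ p₂ : Fin 3 → K) (hp₁ : p₁ ≠ 0) (hp₂ : p₂ ≠ 0)
    (hp₁i : β p₁ p₁ = 0) (hp₂i : β p₂ p₂ = 0)
    (x y : Fin 3 → K) (hx : x ≠ 0) (hy : y ≠ 0)
    (hxi : β x x = 0) (hyi : β y y = 0) :
    (β x p₁ * β y p₂ = 0 ∨
        ∃ c : K, c ≠ 0 ∧ x ⊗ₜ[K] y = c • (p₁ ⊗ₜ[K] p₂)) ↔
      ((∃ c : K, x = c • p₁) ∨ (∃ c : K, y = c • p₂)) :=
  orthogonal_or_equal_iff_general q hq K β βadd βsmul βconj βnondeg p₁ p₂ hp₁ hp₂ hp₁i hp₂i x y hy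
    hxi hyi

end Stmt10
end

section
/- For each permutation f of the Hermitian curve H(2,q²), the set graph(f) = {X ⊗ X^f : X ∈ H(2,q²)} is a set of q³ + 1 totally isotropic points of the Hermitian variety defined by β ⊗ β, no two distinct elements of which are orthogonal with respect to β ⊗ β. -/
/-!
Since `K` has `q²` elements, `a ↦ a ^ q` is a field involution and `β` is a non-degenerate
Hermitian form. The norm `z ↦ z ^ (q + 1)` maps `Kˣ` onto the fixed field with fibres of size
`q + 1`; so Gram–Schmidt gives an orthonormal basis, in which the isotropic vectors are the
solutions of `x ^ (q + 1) + y ^ (q + 1) + z ^ (q + 1) = 0`. Counting these fibrewise gives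
`(q³ + 1)(q² - 1) + 1` vectors, i.e. `q³ + 1` points. A totally isotropic subspace has at most
half the dimension of the space, so two distinct isotropic points of the plane are never
orthogonal. Since `(β ⊗ β)(X ⊗ X^f, Y ⊗ Y^f) = β(X, Y) β(X^f, Y^f)`, this vanishes exactly when
`X = Y`, which gives the isotropy, the non-orthogonality and the injectivity of `X ↦ X ⊗ X^f`.
-/

open scoped TensorProduct

noncomputable section

namespace Stmt11

variable (K : Type*) [Field K]

/-- The Hermitian curve `H(2,q²)`: the projective points of `F_{q²}³` spanned by
nonzero isotropic vectors of `β`. -/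
def HermPt (β : (Fin 3 → K) → (Fin 3 → K) → K) : Type _ :=
  {P : Projectivization K (Fin 3 → K) // β P.rep P.rep = 0}

namespace HermitianCurve

open Module Polynomial Finset
open scoped LinearAlgebra.Projectivization

section Conj

variable {K : Type*} [Field K] [Fintype K] {q : ℕ}

lemma two_le_of_card_eq_sq (hK : Fintype.card K = q ^ 2) : 2 ≤ q := by
  have h := hK ▸ Fintype.one_lt_card (α := K)
  by_contra! hq
  interval_cases q <;> simp at h

lemma add_pow_of_card_eq_sq (hK : Fintype.card K = q ^ 2) (a b : K) :
    (a + b) ^ q = a ^ q + b ^ q := by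
  obtain ⟨n, hp, hn⟩ := FiniteField.card K (ringChar K)
  have := Fact.mk hp
  have hq : q ∣ ringChar K ^ (n : ℕ) := hn ▸ hK ▸ dvd_pow_self q two_ne_zero
  obtain ⟨m, -, rfl⟩ := (Nat.dvd_prime_pow hp).1 hq
  exact add_pow_char_pow a b _ m

def conj (hK : Fintype.card K = q ^ 2) : K →+* K where
  toFun a := a ^ q
  map_one' := one_pow q
  map_mul' a b := mul_pow a b q
  map_zero' := zero_pow (by have := two_le_of_card_eq_sq hK; omega)
  map_add' := add_pow_of_card_eq_sq hK

variable (hK : Fintype.card K = q ^ 2)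

lemma conj_apply (a : K) : conj hK a = a ^ q := rfl

@[simp]
lemma conj_conj (a : K) : conj hK (conj hK a) = a := by
  rw [conj_apply, conj_apply, ← pow_mul, ← sq, ← hK, FiniteField.pow_card]

lemma conj_surjective : Function.Surjective (conj hK) :=
  fun a ↦ ⟨conj hK a, conj_conj hK a⟩

lemma exists_conj_ne : ∃ a : K, conj hK a ≠ a := by
  by_contra! h
  have hq := two_le_of_card_eq_sq hK
  have hroots : (Finset.univ : Finset K).val ⊆ (X ^ q - X : K[X]).roots := fun a _ ↦ by
    rw [mem_roots (FiniteField.X_pow_card_sub_X_ne_zero K (by omega))]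
    simpa [sub_eq_zero, conj_apply] using h a
  have := card_le_degree_of_subset_roots hroots
  rw [Finset.card_univ, hK, FiniteField.X_pow_card_sub_X_natDegree_eq K (by omega)] at this
  nlinarith

end Conj

section Norm

lemma card_pow_succ_eq_zero {K : Type*} [Field K] (q : ℕ) :
    Nat.card {z : K // z ^ (q + 1) = 0} = 1 := by
  have : Unique {z : K // z ^ (q + 1) = 0} :=
    ⟨⟨⟨0, zero_pow q.succ_ne_zero⟩⟩, fun z ↦ Subtype.ext (pow_eq_zero_iff q.succ_ne_zero |>.1 z.2)⟩
  exact Nat.card_unique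

variable {K : Type*} [Field K] [Fintype K] {q : ℕ} (hK : Fintype.card K = q ^ 2)
include hK

lemma card_units_of_card_eq_sq : Nat.card Kˣ = (q + 1) * (q - 1) := by
  classical
  have hq := two_le_of_card_eq_sq hK
  rw [Nat.card_eq_fintype_card, Fintype.card_units, hK]
  zify [Nat.one_le_pow 2 q (by omega), (by omega : 1 ≤ q)]
  ring

/-- `Kˣ` is cyclic of order `(q + 1) * (q - 1)`, so the `(q + 1)`-st power map has kernel of
order `q + 1` and its image is the kernel of the `(q - 1)`-st power map, which contains `c`. -/
lemma card_pow_succ_eq {c : K} (hc : c ^ q = c) (hc0 : c ≠ 0) :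
    Nat.card {z : K // z ^ (q + 1) = c} = q + 1 := by
  classical
  have hq := two_le_of_card_eq_sq hK
  have hG := card_units_of_card_eq_sq hK
  set N : Kˣ →* Kˣ := powMonoidHom (q + 1)
  have hker : Nat.card N.ker = q + 1 := by
    rw [IsCyclic.card_powMonoidHom_ker, hG]
    exact Nat.gcd_eq_right (dvd_mul_right _ _)
  have hrange : N.range = (powMonoidHom (q - 1) : Kˣ →* Kˣ).ker := by
    refine Subgroup.eq_of_le_of_card_ge ?_ ?_
    · rintro _ ⟨x, rfl⟩
      rw [MonoidHom.mem_ker, powMonoidHom_apply, powMonoidHom_apply, ← pow_mul, ← hG,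
        pow_card_eq_one']
    · rw [IsCyclic.card_powMonoidHom_ker, IsCyclic.card_powMonoidHom_range, hG,
        Nat.gcd_eq_right (dvd_mul_left _ _), Nat.gcd_eq_right (dvd_mul_right _ _),
        Nat.mul_div_cancel_left _ (by omega)]
  set c' := Units.mk0 c hc0
  have hc' : c' ∈ Set.range N := by
    rw [← MonoidHom.coe_range, hrange, SetLike.mem_coe, MonoidHom.mem_ker, powMonoidHom_apply]
    refine Units.ext (mul_left_cancel₀ hc0 ?_)
    rw [Units.val_pow_eq_pow_val, Units.val_mk0, ← pow_succ', Nat.sub_add_cancel (by omega), hc,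
      Units.val_one, mul_one]
  have hfiber := MonoidHom.card_fiber_eq_of_mem_range N hc' ⟨1, map_one N⟩
  calc Nat.card {z : K // z ^ (q + 1) = c}
      = Nat.card {u : Kˣ // N u = c'} := Nat.card_congr
        { toFun z := ⟨Units.mk0 z.1 fun h ↦ hc0 (by rw [← z.2, h, zero_pow (by omega)]),
            Units.ext (by simpa [N, c'] using z.2)⟩
          invFun u := ⟨u.1, by simpa [N, c'] using congrArg Units.val u.2⟩
          left_inv _ := rfl
          right_inv _ := Subtype.ext (Units.ext rfl) }
    _ = Nat.card N.ker := by
      simp only [Nat.card_eq_fintype_card, Fintype.card_subtype, hfiber]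
      simp [MonoidHom.mem_ker]
    _ = q + 1 := hker

lemma exists_pow_succ_eq {c : K} (hc : c ^ q = c) (hc0 : c ≠ 0) : ∃ z : K, z ^ (q + 1) = c := by
  have h : 0 < Nat.card {z : K // z ^ (q + 1) = c} := by rw [card_pow_succ_eq hK hc hc0]; omega
  obtain ⟨⟨z, hz⟩⟩ := (Nat.card_pos_iff.1 h).1
  exact ⟨z, hz⟩

end Norm

section Count

variable {K : Type*} [Field K] [Fintype K] {q : ℕ} (hK : Fintype.card K = q ^ 2)
include hK

lemma conj_pow_succ (z : K) : conj hK (z ^ (q + 1)) = z ^ (q + 1) := by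
  rw [map_pow, pow_succ, ← conj_apply hK (conj hK z), conj_conj, conj_apply, ← pow_succ']

lemma card_pow_succ_add_eq_zero {α : Type*} [Fintype α] (g : α → K)
    (hg : ∀ a, conj hK (g a) = g a) :
    Nat.card {p : K × α // p.1 ^ (q + 1) + g p.2 = 0} + q * Nat.card {a // g a = 0} =
      (q + 1) * Nat.card α := by
  classical
  have hfiber : ∀ a, Nat.card {z : K // z ^ (q + 1) = -g a} = if g a = 0 then 1 else q + 1 := by
    intro a
    split_ifs with h
    · rw [h, neg_zero, card_pow_succ_eq_zero]
    · refine card_pow_succ_eq hK ?_ (neg_ne_zero.2 h)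
      rw [← conj_apply hK, map_neg, hg]
  have e : {p : K × α // p.1 ^ (q + 1) + g p.2 = 0} ≃ Σ a, {z : K // z ^ (q + 1) = -g a} :=
    { toFun p := ⟨p.1.2, p.1.1, eq_neg_of_add_eq_zero_left p.2⟩
      invFun s := ⟨(s.2.1, s.1), by rw [s.2.2, neg_add_cancel]⟩
      left_inv _ := rfl
      right_inv _ := rfl }
  rw [Nat.card_congr e, Nat.card_sigma, Nat.card_eq_fintype_card (α := {a // g a = 0}),
    Fintype.card_subtype, Nat.card_eq_fintype_card, ← Finset.card_univ,
    ← card_filter_add_card_filter_not (s := univ) (fun a ↦ g a = 0)]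
  simp only [hfiber, sum_ite, sum_const, smul_eq_mul]
  ring

lemma card_sum_pow_succ_eq_zero_succ (n : ℕ) :
    Nat.card {c : Fin (n + 1) → K // ∑ i, c i ^ (q + 1) = 0} +
        q * Nat.card {c : Fin n → K // ∑ i, c i ^ (q + 1) = 0} = (q + 1) * q ^ (2 * n) := by
  have hsplit : Nat.card {c : Fin (n + 1) → K // ∑ i, c i ^ (q + 1) = 0} =
      Nat.card {p : K × (Fin n → K) // p.1 ^ (q + 1) + ∑ i, p.2 i ^ (q + 1) = 0} :=
    Nat.card_congr ((Fin.consEquiv fun _ ↦ K).subtypeEquiv fun p ↦ by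
      simp [Fin.sum_univ_succ]).symm
  have h := card_pow_succ_add_eq_zero hK (fun c : Fin n → K ↦ ∑ i, c i ^ (q + 1))
    fun c ↦ by simp only [map_sum, conj_pow_succ hK]
  beta_reduce at h
  rw [hsplit, h, Nat.card_fun, Nat.card_eq_fintype_card, hK, Nat.card_eq_fintype_card,
    Fintype.card_fin, ← pow_mul]

lemma card_sum_pow_succ_eq_zero_three :
    Nat.card {c : Fin 3 → K // ∑ i, c i ^ (q + 1) = 0} = (q ^ 3 + 1) * (q ^ 2 - 1) + 1 := by
  have h0 : Nat.card {c : Fin 0 → K // ∑ i, c i ^ (q + 1) = 0} = 1 := by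
    have : Unique {c : Fin 0 → K // ∑ i, c i ^ (q + 1) = 0} :=
      ⟨⟨⟨finZeroElim, by simp⟩⟩, fun c ↦ Subtype.ext (Subsingleton.elim _ _)⟩
    exact Nat.card_unique
  have h1 := card_sum_pow_succ_eq_zero_succ hK 0
  have h2 := card_sum_pow_succ_eq_zero_succ hK 1
  have h3 := card_sum_pow_succ_eq_zero_succ hK 2
  have hq : 1 ≤ q ^ 2 := Nat.one_le_pow _ _ (by have := two_le_of_card_eq_sq hK; omega)
  zify [hq] at h0 h1 h2 h3 ⊢
  linear_combination h3 - (q : ℤ) * h2 + (q : ℤ) ^ 2 * h1 - (q : ℤ) ^ 3 * h0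

end Count

section Isotropic

variable {K V : Type*} [Field K] [AddCommGroup V] [Module K V] [FiniteDimensional K V]
  {σ : K →+* K} {B : V →ₗ[K] V →ₛₗ[σ] K}

/-- `y ↦ B · y` embeds a totally isotropic subspace `W` `σ`-semilinearly into the annihilator
of `W`, which has dimension `dim V - dim W`. -/
theorem two_mul_finrank_le_of_isotropic (hσ : Function.Surjective σ) (hB : B.SeparatingRight)
    {W : Submodule K V} (hW : ∀ x ∈ W, ∀ y ∈ W, B x y = 0) :
    2 * finrank K W ≤ finrank K V := by
  let j : W →+ W.dualAnnihilator :=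
    { toFun y := ⟨B.flip y, (Submodule.mem_dualAnnihilator _).2 fun x hx ↦ hW x hx y y.2⟩
      map_zero' := by ext; simp
      map_add' _ _ := by ext; simp }
  have hj : Function.Injective j := fun y y' h ↦ Subtype.ext <|
    (LinearMap.ker_eq_bot (f := B.flip)).1 (LinearMap.separatingRight_iff_flip_ker_eq_bot.1 hB)
      (congrArg Subtype.val h)
  have hind := ((Module.finBasis K W).linearIndependent.map_of_surjective_injectiveₛ σ j hσ hj
    fun r y ↦ by ext; simp [j]).fintype_card_le_finrank
  have := Subspace.finrank_add_finrank_dualAnnihilator_eq W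
  rw [Fintype.card_fin] at hind
  omega

theorem apply_ne_zero_of_linearIndependent (hσ : Function.Surjective σ) (hB : B.SeparatingRight)
    (hB' : B.IsRefl) (hV : finrank K V ≤ 3) {u v : V} (huv : LinearIndependent K ![u, v])
    (hu : B u u = 0) (hv : B v v = 0) : B u v ≠ 0 := by
  intro h
  have hW : ∀ x ∈ Submodule.span K (Set.range ![u, v]), ∀ y ∈ Submodule.span K (Set.range ![u, v]),
      B x y = 0 := by
    simp only [Matrix.range_cons_cons_empty, Submodule.mem_span_pair]
    rintro _ ⟨a, b, rfl⟩ _ ⟨c, d, rfl⟩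
    simp [hu, hv, h, hB' u v h]
  have := two_mul_finrank_le_of_isotropic hσ hB hW
  rw [finrank_span_eq_card huv, Fintype.card_fin] at this
  omega

end Isotropic

section Hermitian

variable {K V : Type*} [Field K] [AddCommGroup V] [Module K V] {σ : K →+* K}

def IsHermitian (B : V →ₗ[K] V →ₛₗ[σ] K) : Prop :=
  ∀ x y, σ (B x y) = B y x

def IsOrthonormal {ι : Type*} [DecidableEq ι] (B : V →ₗ[K] V →ₛₗ[σ] K) (e : ι → V) : Prop :=
  ∀ i j, B (e i) (e j) = if i = j then 1 else 0

lemma IsOrthonormal.apply_self_eq_sum {ι : Type*} [Fintype ι] [DecidableEq ι]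
    {B : V →ₗ[K] V →ₛₗ[σ] K} {b : Basis ι K V} (hb : IsOrthonormal B b) (v : V) :
    B v v = ∑ i, b.repr v i * σ (b.repr v i) := by
  conv_lhs => rw [← b.sum_repr v]
  simp only [map_sum, map_smul, map_smulₛₗ, LinearMap.coe_sum, Finset.sum_apply,
    LinearMap.smul_apply, hb _ _, smul_eq_mul, mul_ite, mul_one, mul_zero, Finset.sum_ite_eq',
    Finset.mem_univ, if_true]
  exact Finset.sum_congr rfl fun i _ ↦ mul_comm _ _

namespace IsHermitian

variable {B : V →ₗ[K] V →ₛₗ[σ] K} (hB : IsHermitian B)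
include hB

lemma isRefl : B.IsRefl := fun x y h ↦ by rw [← hB, h, map_zero]

lemma separatingRight (h : B.SeparatingLeft) : B.SeparatingRight :=
  fun y hy ↦ h y fun x ↦ by rw [← hB, hy, map_zero]

lemma apply_eq_zero_of_forall_apply_self (hσ : ∃ a, σ a ≠ a) {U : Submodule K V}
    (hU : ∀ x ∈ U, B x x = 0) {x y : V} (hx : x ∈ U) (hy : y ∈ U) : B x y = 0 := by
  have key : ∀ a : K, σ a * B x y + a * σ (B x y) = 0 := fun a ↦ by
    have := hU _ (U.add_mem hx (U.smul_mem a hy))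
    simp only [map_add, map_smul, map_smulₛₗ, LinearMap.add_apply, LinearMap.smul_apply,
      smul_eq_mul, hU x hx, hU y hy, ← hB x y] at this
    linear_combination this
  obtain ⟨a, ha⟩ := hσ
  have h1 := key 1
  rw [map_one, one_mul, one_mul] at h1
  have : (σ a - a) * B x y = 0 := by linear_combination key a - a * h1
  exact (mul_eq_zero.1 this).resolve_left (sub_ne_zero.2 ha)

end IsHermitian

variable [Fintype K] {q : ℕ} {hK : Fintype.card K = q ^ 2} {B : V →ₗ[K] V →ₛₗ[conj hK] K}

lemma apply_smul_smul (a : K) (v : V) : B (a • v) (a • v) = a ^ (q + 1) * B v v := by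
  rw [LinearMap.map_smulₛₗ₂, map_smulₛₗ, RingHom.id_apply, smul_eq_mul, smul_eq_mul, conj_apply,
    pow_succ', mul_assoc]

namespace IsHermitian

variable (hB : IsHermitian B) (hsep : B.SeparatingLeft)
include hB hsep

/-- Otherwise, by polarization, the orthogonal complement of `e` is totally isotropic, hence lies
in the radical, and `e` spans `V`. -/
lemma exists_orthogonal_apply_self_eq_one [FiniteDimensional K V] {k : ℕ} {e : Fin k → V}
    (he : IsOrthonormal B e) (hk : k < finrank K V) :
    ∃ w, (∀ i, B (e i) w = 0) ∧ B w w = 1 := by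
  set U : Submodule K V := ⨅ i, LinearMap.ker (B (e i))
  have hmemU : ∀ z, z ∈ U ↔ ∀ i, B (e i) z = 0 := by simp [U, Submodule.mem_iInf]
  have hproj : ∀ y, y - ∑ i, B y (e i) • e i ∈ U := fun y ↦ (hmemU _).2 fun j ↦ by
    simp [map_sum, map_smulₛₗ, he _ _, hB y]
  obtain ⟨w, hwU, hw⟩ : ∃ w ∈ U, B w w ≠ 0 := by
    by_contra! h
    have hspan : ∀ y, y ∈ Submodule.span K (Set.range e) := fun y ↦ by
      have hze : ∀ i, B (y - ∑ i, B y (e i) • e i) (e i) = 0 := fun i ↦ by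
        rw [← hB, (hmemU _).1 (hproj y) i, map_zero]
      have hz : y - ∑ i, B y (e i) • e i = 0 := hsep _ fun x ↦ by
        rw [← sub_add_cancel x (∑ i, B x (e i) • e i), map_add,
          hB.apply_eq_zero_of_forall_apply_self (exists_conj_ne hK) h (hproj y) (hproj x)]
        simp only [map_sum, map_smulₛₗ, hze, smul_zero, Finset.sum_const_zero, add_zero]
      rw [sub_eq_zero.1 hz]
      exact Submodule.sum_mem _ fun i _ ↦ Submodule.smul_mem _ _ (Submodule.subset_span ⟨i, rfl⟩)
    have := finrank_range_le_card (R := K) e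
    rw [Set.finrank, Submodule.eq_top_iff'.2 hspan, finrank_top, Fintype.card_fin] at this
    omega
  obtain ⟨a, ha⟩ := exists_pow_succ_eq hK (c := (B w w)⁻¹)
    (by rw [← conj_apply hK, map_inv₀, hB]) (inv_ne_zero hw)
  refine ⟨a • w, fun i ↦ by rw [map_smulₛₗ, (hmemU w).1 hwU i, smul_zero], ?_⟩
  rw [apply_smul_smul, ha, inv_mul_cancel₀ hw]

lemma exists_isOrthonormal [FiniteDimensional K V] :
    ∀ k ≤ finrank K V, ∃ e : Fin k → V, IsOrthonormal B e
  | 0, _ => ⟨finZeroElim, fun i ↦ i.elim0⟩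
  | k + 1, hk => by
    obtain ⟨e, he⟩ := exists_isOrthonormal k (by omega)
    obtain ⟨w, hwe, hw⟩ := hB.exists_orthogonal_apply_self_eq_one hsep he (by omega)
    refine ⟨Fin.snoc e w, fun i j ↦ ?_⟩
    induction i using Fin.lastCases <;> induction j using Fin.lastCases <;>
      simp [he _ _, hwe, hw, ← hB _ w, Fin.castSucc_ne_last, (Fin.castSucc_ne_last _).symm]

lemma exists_basis_isOrthonormal [FiniteDimensional K V] :
    ∃ b : Basis (Fin (finrank K V)) K V, IsOrthonormal B b := by
  obtain ⟨e, he⟩ := hB.exists_isOrthonormal hsep _ le_rfl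
  have hli : LinearIndependent K e := LinearMap.linearIndependent_of_isOrthoᵢ
    (fun i j hij ↦ (he i j).trans (if_neg hij)) (fun i ↦ by simp [he i i])
  refine ⟨basisOfLinearIndependentOfCardEqFinrank' e hli (Fintype.card_fin _), ?_⟩
  rwa [coe_basisOfLinearIndependentOfCardEqFinrank']

end IsHermitian

end Hermitian

section Points

variable {K V : Type*} [Field K] [Fintype K] [AddCommGroup V] [Module K V] {q : ℕ}
  {hK : Fintype.card K = q ^ 2} {B : V →ₗ[K] V →ₛₗ[conj hK] K}

lemma card_isotropic_eq_card_points_mul [Finite V] :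
    Nat.card {v : V // B v v = 0} =
      Nat.card {P : ℙ K V // B P.rep P.rep = 0} * (q ^ 2 - 1) + 1 := by
  have hzero : (0 : V) ∈ {v : V | B v v = 0} := by simp
  have hunits : Nat.card Kˣ = q ^ 2 - 1 := by
    rw [← Nat.card_eq_fintype_card, Nat.card_eq_card_units_add_one] at hK
    omega
  have hscale : ∀ v : {v : V // v ≠ 0}, B v v = 0 ↔
      B (Projectivization.mk K v.1 v.2).rep (Projectivization.mk K v.1 v.2).rep = 0 := fun v ↦ by
    obtain ⟨a, ha⟩ := Projectivization.exists_smul_eq_mk_rep K v.1 v.2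
    rw [← ha, Units.smul_def, apply_smul_smul, mul_eq_zero, or_iff_right (pow_ne_zero _ a.ne_zero)]
  calc Nat.card {v : V // B v v = 0}
      = Nat.card ↥({v : V | B v v = 0} \ {0}) + 1 := by
        rw [Nat.card_coe_set_eq, Set.ncard_sdiff_singleton_add_one hzero (Set.toFinite _)]; rfl
    _ = Nat.card {w : {v : V // v ≠ 0} // B w w = 0} + 1 := by
        congr 1
        exact Nat.card_congr (((Equiv.subtypeEquivRight fun v ↦ by simp [and_comm])).trans
          (Equiv.subtypeSubtypeEquivSubtypeInter (· ≠ 0) fun v ↦ B v v = 0).symm)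
    _ = Nat.card {x : ℙ K V × Kˣ // B x.1.rep x.1.rep = 0} + 1 :=
        congrArg (· + 1) <| Nat.card_congr <|
          (Projectivization.nonZeroEquivProjectivizationProdUnits K V).subtypeEquiv hscale
    _ = Nat.card {P : ℙ K V // B P.rep P.rep = 0} * (q ^ 2 - 1) + 1 := by
        rw [Nat.card_congr (Equiv.prodSubtypeFstEquivSubtypeProd (β := Kˣ)
          (p := fun P : ℙ K V ↦ B P.rep P.rep = 0)), Nat.card_prod, hunits]

namespace IsHermitian

variable (hB : IsHermitian B) (hsep : B.SeparatingLeft)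
include hB hsep

theorem card_isotropic_points [FiniteDimensional K V] (hV : finrank K V = 3) :
    Nat.card {P : ℙ K V // B P.rep P.rep = 0} = q ^ 3 + 1 := by
  have : Finite V := Module.finite_of_finite K
  obtain ⟨b, hb⟩ := hB.exists_basis_isOrthonormal hsep
  have hvec : Nat.card {v : V // B v v = 0} =
      Nat.card {c : Fin (finrank K V) → K // ∑ i, c i ^ (q + 1) = 0} :=
    Nat.card_congr <| b.equivFun.toEquiv.subtypeEquiv fun v ↦ by
      simp [hb.apply_self_eq_sum, conj_apply, ← pow_succ']
  rw [hV, card_sum_pow_succ_eq_zero_three hK, card_isotropic_eq_card_points_mul] at hvec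
  have hq : 0 < q ^ 2 - 1 := by
    have := two_le_of_card_eq_sq hK
    have : 4 ≤ q ^ 2 := by nlinarith
    omega
  exact (Nat.eq_of_mul_eq_mul_right hq (by omega)).symm

theorem apply_rep_ne_zero [FiniteDimensional K V] (hV : finrank K V ≤ 3) {P Q : ℙ K V}
    (hP : B P.rep P.rep = 0) (hQ : B Q.rep Q.rep = 0) (hPQ : P ≠ Q) : B P.rep Q.rep ≠ 0 := by
  have hind := Projectivization.independent_iff.1
    ((Projectivization.independent_pair_iff_ne P Q).2 hPQ)
  have hrep : Projectivization.rep ∘ ![P, Q] = ![P.rep, Q.rep] := by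
    ext i : 1
    fin_cases i <;> rfl
  rw [hrep] at hind
  exact apply_ne_zero_of_linearIndependent (conj_surjective hK) (hB.separatingRight hsep)
    hB.isRefl hV hind hP hQ

end IsHermitian

end Points

section OfFunction

variable {K V : Type*} [Field K] [Fintype K] [AddCommGroup V] [Module K V] {q : ℕ}
  (hK : Fintype.card K = q ^ 2) (β : V → V → K) (βadd : ∀ x x' y, β (x + x') y = β x y + β x' y)
  (βsmul : ∀ (a : K) (x y), β (a • x) y = a * β x y) (βconj : ∀ x y, β y x = β x y ^ q)

def sesqFormOfHermitian : V →ₗ[K] V →ₛₗ[conj hK] K :=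
  LinearMap.mk₂'ₛₗ (RingHom.id K) (conj hK) β βadd βsmul
    (fun x y y' ↦ by
      rw [βconj (y + y') x, βadd, ← conj_apply hK, map_add, conj_apply, conj_apply, ← βconj,
        ← βconj])
    (fun a x y ↦ by rw [βconj (a • y) x, βsmul, mul_pow, ← βconj]; rfl)

lemma isHermitian_sesqFormOfHermitian :
    IsHermitian (sesqFormOfHermitian hK β βadd βsmul βconj) :=
  fun x y ↦ (βconj x y).symm

end OfFunction

end HermitianCurve

theorem graph_is_ovoid_general
    (q : ℕ)
    (K : Type*) [Field K] [Fintype K] (hK : Fintype.card K = q ^ 2)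
    (β : (Fin 3 → K) → (Fin 3 → K) → K)
    (βadd : ∀ x x' y, β (x + x') y = β x y + β x' y)
    (βsmul : ∀ (a : K) (x y), β (a • x) y = a * β x y)
    (βconj : ∀ x y, β y x = β x y ^ q)
    (βnondeg : ∀ x, (∀ y, β x y = 0) → x = 0)
    (B : (Fin 3 → K) ⊗[K] (Fin 3 → K) → (Fin 3 → K) ⊗[K] (Fin 3 → K) → K)
    (hB : ∀ u₁ v₁ u₂ v₂ : Fin 3 → K,
      B (u₁ ⊗ₜ[K] v₁) (u₂ ⊗ₜ[K] v₂) = β u₁ u₂ * β v₁ v₂)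
    (f : Equiv.Perm (HermPt K β)) :
    Set.ncard {t : (Fin 3 → K) ⊗[K] (Fin 3 → K) |
        ∃ X : HermPt K β, t = X.val.rep ⊗ₜ[K] (f X).val.rep} = q ^ 3 + 1 ∧
    (∀ X : HermPt K β,
      B (X.val.rep ⊗ₜ[K] (f X).val.rep) (X.val.rep ⊗ₜ[K] (f X).val.rep) = 0) ∧
    (∀ X Y : HermPt K β, X ≠ Y →
      B (X.val.rep ⊗ₜ[K] (f X).val.rep) (Y.val.rep ⊗ₜ[K] (f Y).val.rep) ≠ 0) := by
  have hH := HermitianCurve.isHermitian_sesqFormOfHermitian hK β βadd βsmul βconj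
  have hV : Module.finrank K (Fin 3 → K) = 3 := Module.finrank_fin_fun K
  have hβ : ∀ X Y : HermPt K β, X ≠ Y → β X.val.rep Y.val.rep ≠ 0 := fun X Y h ↦
    hH.apply_rep_ne_zero βnondeg hV.le X.2 Y.2 (Subtype.val_injective.ne h)
  have hiso : ∀ X : HermPt K β,
      B (X.val.rep ⊗ₜ[K] (f X).val.rep) (X.val.rep ⊗ₜ[K] (f X).val.rep) = 0 := fun X ↦ by
    rw [hB, X.2, zero_mul]
  have hnonorth : ∀ X Y : HermPt K β, X ≠ Y →
      B (X.val.rep ⊗ₜ[K] (f X).val.rep) (Y.val.rep ⊗ₜ[K] (f Y).val.rep) ≠ 0 := fun X Y h ↦ by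
    rw [hB]
    exact mul_ne_zero (hβ X Y h) (hβ _ _ (f.injective.ne h))
  have hinj : Function.Injective fun X : HermPt K β ↦ X.val.rep ⊗ₜ[K] (f X).val.rep :=
    fun X Y h ↦ by_contra fun hXY ↦ hnonorth X Y hXY (by simp only at h; rw [h]; exact hiso Y)
  refine ⟨?_, hiso, hnonorth⟩
  rw [show {t | ∃ X : HermPt K β, t = X.val.rep ⊗ₜ[K] (f X).val.rep} =
      Set.range fun X : HermPt K β ↦ X.val.rep ⊗ₜ[K] (f X).val.rep by
    ext; simp [eq_comm], Set.ncard_range_of_injective hinj]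
  exact hH.card_isotropic_points βnondeg hV

/-- For each permutation `f` of the Hermitian curve `H(2,q²)`, the set
`graph(f) = {X ⊗ X^f : X ∈ H(2,q²)}` is a set of `q³ + 1` totally isotropic points of
the Hermitian variety defined by `β ⊗ β`, no two distinct elements of which are
orthogonal with respect to `β ⊗ β`. -/
theorem graph_is_ovoid
    (q : ℕ) (hq : IsPrimePow q)
    (K : Type*) [Field K] [Fintype K] (hK : Fintype.card K = q ^ 2)
    (β : (Fin 3 → K) → (Fin 3 → K) → K)
    (βadd : ∀ x x' y, β (x + x') y = β x y + β x' y)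
    (βsmul : ∀ (a : K) (x y), β (a • x) y = a * β x y)
    (βconj : ∀ x y, β y x = β x y ^ q)
    (βnondeg : ∀ x, (∀ y, β x y = 0) → x = 0)
    (B : (Fin 3 → K) ⊗[K] (Fin 3 → K) → (Fin 3 → K) ⊗[K] (Fin 3 → K) → K)
    (hB : ∀ u₁ v₁ u₂ v₂ : Fin 3 → K,
      B (u₁ ⊗ₜ[K] v₁) (u₂ ⊗ₜ[K] v₂) = β u₁ u₂ * β v₁ v₂)
    (f : Equiv.Perm (HermPt K β)) :
    Set.ncard {t : (Fin 3 → K) ⊗[K] (Fin 3 → K) |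
        ∃ X : HermPt K β, t = X.val.rep ⊗ₜ[K] (f X).val.rep} = q ^ 3 + 1 ∧
    (∀ X : HermPt K β,
      B (X.val.rep ⊗ₜ[K] (f X).val.rep) (X.val.rep ⊗ₜ[K] (f X).val.rep) = 0) ∧
    (∀ X Y : HermPt K β, X ≠ Y →
      B (X.val.rep ⊗ₜ[K] (f X).val.rep) (Y.val.rep ⊗ₜ[K] (f Y).val.rep) ≠ 0) :=
  graph_is_ovoid_general q K hK β βadd βsmul βconj βnondeg B hB f

end Stmt11
end
end

section
/- Let {P_i ⊗ Q_i : i = 0, …, q³} be a set of q³ + 1 points of U_{2,2} (with all P_i, Q_i in the Hermitian curve H(2,q²)), no two distinct elements of which are orthogonal with respect to β ⊗ β. Then the Q_i are pairwise distinct and the P_i are pairwise distinct; in particular the map P_i ↦ Q_i is a well-defined bijection of H(2,q²). -/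
noncomputable section

namespace Stmt12

variable (K : Type*) [Field K]

/-- The Hermitian curve `H(2,q²)`: the projective points of `F_{q²}³` spanned by
nonzero isotropic vectors of `β`. -/
def HermPt (β : (Fin 3 → K) → (Fin 3 → K) → K) : Type _ :=
  {P : Projectivization K (Fin 3 → K) // β P.rep P.rep = 0}

lemma ext_perm {X : Type*} [Finite X] {n : ℕ} {f g : Fin n → X}
    (hf : Function.Injective f) (hg : Function.Injective g) :
    ∃ σ : Equiv.Perm X, ∀ i, σ (f i) = g i := by
  classical
  have : Fintype X := Fintype.ofFinite X
  have hc : Fintype.card ((Set.range f)ᶜ : Set X) =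
      Fintype.card ((Set.range g)ᶜ : Set X) := by
    rw [Fintype.card_compl_set, Fintype.card_compl_set,
      Set.card_range_of_injective hf, Set.card_range_of_injective hg]
  obtain ⟨c⟩ := Fintype.card_eq.mp hc
  refine ⟨(Equiv.Set.sumCompl (Set.range f)).symm.trans
    ((Equiv.sumCongr ((Equiv.ofInjective f hf).symm.trans (Equiv.ofInjective g hg)) c).trans
      (Equiv.Set.sumCompl (Set.range g))), fun i => ?_⟩
  rw [Equiv.trans_apply, Equiv.trans_apply,
    Equiv.Set.sumCompl_symm_apply_of_mem (Set.mem_range_self i)]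
  simp [Equiv.ofInjective_symm_apply]

/-- Let `{P_i ⊗ Q_i : i = 0,…,q³}` be a set of `q³ + 1` points of `U_{2,2}`, no two
distinct elements of which are orthogonal with respect to `β ⊗ β` (on simple tensors,
`(β⊗β)(P_i ⊗ Q_i, P_j ⊗ Q_j) = β(P_i,P_j)β(Q_i,Q_j)`). Then the `Q_i` are pairwise
distinct and the `P_i` are pairwise distinct; in particular `P_i ↦ Q_i` is a
well-defined bijection of `H(2,q²)`. -/
theorem pairwise_nonorthogonal_gives_bijection
    (q : ℕ) (hq : IsPrimePow q)
    (K : Type*) [Field K] [Fintype K] (hK : Fintype.card K = q ^ 2)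
    (β : (Fin 3 → K) → (Fin 3 → K) → K)
    (βadd : ∀ x x' y, β (x + x') y = β x y + β x' y)
    (βsmul : ∀ (a : K) (x y), β (a • x) y = a * β x y)
    (βconj : ∀ x y, β y x = β x y ^ q)
    (βnondeg : ∀ x, (∀ y, β x y = 0) → x = 0)
    (P Q : Fin (q ^ 3 + 1) → HermPt K β)
    (hdistinct : ∀ i j, i ≠ j → (P i, Q i) ≠ (P j, Q j))
    (horth : ∀ i j, i ≠ j →
      β (P i).val.rep (P j).val.rep * β (Q i).val.rep (Q j).val.rep ≠ 0) :
    Function.Injective Q ∧ Function.Injective P ∧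
      ∃ σ : Equiv.Perm (HermPt K β), ∀ i, σ (P i) = Q i := by
  have hQ : Function.Injective Q := by
    intro i j hij
    by_contra hne
    exact horth i j hne (mul_eq_zero_of_right _ (by rw [hij]; exact (Q j).prop))
  have hP : Function.Injective P := by
    intro i j hij
    by_contra hne
    exact horth i j hne (mul_eq_zero_of_left (by rw [hij]; exact (P j).prop) _)
  have : Finite (Projectivization K (Fin 3 → K)) := Quotient.finite _
  have : Finite (HermPt K β) := by unfold HermPt; infer_instance
  exact ⟨hQ, hP, ext_perm hP hQ⟩

end Stmt12
end
end
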